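/- arXiv:1512.09265 — 5 statements merged into one kernel-verified Lean document; each statement's English description precedes it below -/
import Mathlib

section
/- The function (x, y) ↦ 1/(1 − x·y) is integrable on the open unit square (0,1) × (0,1) in ℝ², and its integral equals ζ(2) = π²/6. -/
open MeasureTheory Real Set

/-! Expanding `1 / (1 - x y) = ∑ₙ (x y)ⁿ` and integrating term by term (monotone convergence, all
terms being nonnegative), the `n`-th term contributes `(∫₀¹ xⁿ dx)² = 1 / (n + 1)²`, so the
integral is `∑ₙ 1 / (n + 1)² = ζ(2)`. -/

theorem integrable_and_integral_eq_of_lintegral_ofReal_eq {α : Type*} [MeasurableSpace α]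
    {μ : Measure α} {f : α → ℝ} {c : ℝ} (hf : AEStronglyMeasurable f μ)
    (hf_nonneg : 0 ≤ᵐ[μ] f) (hc : 0 ≤ c)
    (h : ∫⁻ a, ENNReal.ofReal (f a) ∂μ = ENNReal.ofReal c) :
    Integrable f μ ∧ ∫ a, f a ∂μ = c :=
  ⟨⟨hf, by rw [hasFiniteIntegral_iff_ofReal hf_nonneg, h]; exact ENNReal.ofReal_lt_top⟩,
    by rw [integral_eq_lintegral_of_nonneg_ae hf_nonneg hf, h, ENNReal.toReal_ofReal hc]⟩

theorem setLIntegral_prod_mul {α β : Type*} [MeasurableSpace α] [MeasurableSpace β]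
    {μ : Measure α} {ν : Measure β} [SFinite μ] [SFinite ν] {s : Set α} {t : Set β}
    {f : α → ENNReal} {g : β → ENNReal} (hf : AEMeasurable f (μ.restrict s))
    (hg : AEMeasurable g (ν.restrict t)) :
    ∫⁻ p in s ×ˢ t, f p.1 * g p.2 ∂μ.prod ν =
      (∫⁻ x in s, f x ∂μ) * ∫⁻ y in t, g y ∂ν := by
  rw [← Measure.prod_restrict, lintegral_prod_mul hf hg]

theorem mul_mem_Ico_of_mem_Ioo {R : Type*} [Semiring R] [PartialOrder R] [IsOrderedRing R]
    {x y : R} (hx : x ∈ Ioo 0 1) (hy : y ∈ Ioo 0 1) : x * y ∈ Ico 0 1 :=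
  ⟨mul_nonneg hx.1.le hy.1.le, mul_lt_one_of_nonneg_of_lt_one_left hx.1.le hx.2 hy.2.le⟩

theorem ENNReal.ofReal_one_div_one_sub_eq_tsum_ofReal_pow {r : ℝ} (h0 : 0 ≤ r) (h1 : r < 1) :
    ENNReal.ofReal (1 / (1 - r)) = ∑' n : ℕ, ENNReal.ofReal (r ^ n) := by
  rw [one_div, ← tsum_geometric_of_lt_one h0 h1,
    ENNReal.ofReal_tsum_of_nonneg (pow_nonneg h0) (summable_geometric_of_lt_one h0 h1)]

theorem hasSum_one_div_nat_add_one_sq :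
    HasSum (fun n : ℕ => 1 / ((n : ℝ) + 1) ^ 2) (π ^ 2 / 6) := by
  have h := (hasSum_nat_add_iff (f := fun n : ℕ => 1 / (n : ℝ) ^ 2) 1).mpr
    (by simpa using hasSum_zeta_two)
  simpa using h

theorem tsum_pnat_one_div_sq : ∑' k : ℕ+, (1 : ℝ) / (k : ℝ) ^ 2 = π ^ 2 / 6 := by
  rw [tsum_pnat_eq_tsum_succ (f := fun n : ℕ => 1 / (n : ℝ) ^ 2)]
  simpa using hasSum_one_div_nat_add_one_sq.tsum_eq

theorem lintegral_Ioo_zero_one_ofReal_pow (n : ℕ) :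
    ∫⁻ x in Ioo (0 : ℝ) 1, ENNReal.ofReal (x ^ n) = ENNReal.ofReal (1 / (n + 1)) := by
  rw [← ofReal_integral_eq_lintegral_ofReal, ← integral_Ioc_eq_integral_Ioo,
    ← intervalIntegral.integral_of_le zero_le_one]
  · simp [integral_pow]
  · exact (continuous_pow n).integrableOn_Ioc.mono_set Ioo_subset_Ioc_self
  · filter_upwards [ae_restrict_mem measurableSet_Ioo] with x hx
    exact pow_nonneg hx.1.le n

theorem lintegral_unitSquare_ofReal_mul_pow (n : ℕ) :
    ∫⁻ p in Ioo (0 : ℝ) 1 ×ˢ Ioo (0 : ℝ) 1, ENNReal.ofReal ((p.1 * p.2) ^ n) =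
      ENNReal.ofReal (1 / ((n : ℝ) + 1) ^ 2) := by
  have hsplit : EqOn (fun p : ℝ × ℝ => ENNReal.ofReal ((p.1 * p.2) ^ n))
      (fun p => ENNReal.ofReal (p.1 ^ n) * ENNReal.ofReal (p.2 ^ n))
      (Ioo (0 : ℝ) 1 ×ˢ Ioo (0 : ℝ) 1) := fun p hp => by
    dsimp only
    rw [mul_pow, ENNReal.ofReal_mul (pow_nonneg hp.1.1.le n)]
  rw [setLIntegral_congr_fun (measurableSet_Ioo.prod measurableSet_Ioo) hsplit,
    Measure.volume_eq_prod, setLIntegral_prod_mul (f := fun x => ENNReal.ofReal (x ^ n))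
      (g := fun y => ENNReal.ofReal (y ^ n)) (by fun_prop) (by fun_prop),
    lintegral_Ioo_zero_one_ofReal_pow, ← ENNReal.ofReal_mul (by positivity)]
  congr 1
  field_simp

theorem lintegral_unitSquare_ofReal_one_div_one_sub_mul :
    ∫⁻ p in Ioo (0 : ℝ) 1 ×ˢ Ioo (0 : ℝ) 1, ENNReal.ofReal (1 / (1 - p.1 * p.2)) =
      ENNReal.ofReal (π ^ 2 / 6) := by
  have hgeom : EqOn (fun p : ℝ × ℝ => ENNReal.ofReal (1 / (1 - p.1 * p.2)))
      (fun p => ∑' n : ℕ, ENNReal.ofReal ((p.1 * p.2) ^ n))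
      (Ioo (0 : ℝ) 1 ×ˢ Ioo (0 : ℝ) 1) := fun p ⟨hx, hy⟩ =>
    have hxy := mul_mem_Ico_of_mem_Ioo hx hy
    ENNReal.ofReal_one_div_one_sub_eq_tsum_ofReal_pow hxy.1 hxy.2
  rw [setLIntegral_congr_fun (measurableSet_Ioo.prod measurableSet_Ioo) hgeom,
    lintegral_tsum fun n => by fun_prop]
  simp_rw [lintegral_unitSquare_ofReal_mul_pow]
  rw [← ENNReal.ofReal_tsum_of_nonneg (fun n => by positivity)
    hasSum_one_div_nat_add_one_sq.summable, hasSum_one_div_nat_add_one_sq.tsum_eq]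

/-- The function `(x, y) ↦ 1/(1 − x·y)` is integrable on the open unit square
`(0,1) × (0,1)` in `ℝ²`, and its integral equals `ζ(2) = π²/6`. -/
theorem integrable_and_integral_one_div_one_sub_mul :
    IntegrableOn (fun p : ℝ × ℝ => 1 / (1 - p.1 * p.2))
      (Set.Ioo (0 : ℝ) 1 ×ˢ Set.Ioo (0 : ℝ) 1) ∧
    (∫ p in Set.Ioo (0 : ℝ) 1 ×ˢ Set.Ioo (0 : ℝ) 1, (1 : ℝ) / (1 - p.1 * p.2))
      = ∑' k : ℕ+, (1 : ℝ) / (k : ℝ) ^ 2 ∧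
    (∑' k : ℕ+, (1 : ℝ) / (k : ℝ) ^ 2) = π ^ 2 / 6 := by
  have hnonneg : 0 ≤ᵐ[volume.restrict (Ioo (0 : ℝ) 1 ×ˢ Ioo (0 : ℝ) 1)]
      fun p : ℝ × ℝ => 1 / (1 - p.1 * p.2) := by
    filter_upwards [ae_restrict_mem (measurableSet_Ioo.prod measurableSet_Ioo)]
      with p ⟨hx, hy⟩
    exact one_div_nonneg.mpr (sub_nonneg.mpr (mul_mem_Ico_of_mem_Ioo hx hy).2.le)
  have hmeas : Measurable fun p : ℝ × ℝ => 1 / (1 - p.1 * p.2) := by fun_prop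
  obtain ⟨hint, hintegral⟩ := integrable_and_integral_eq_of_lintegral_ofReal_eq
    hmeas.aestronglyMeasurable hnonneg (by positivity)
    lintegral_unitSquare_ofReal_one_div_one_sub_mul
  exact ⟨hint, hintegral.trans tsum_pnat_one_div_sq.symm, tsum_pnat_one_div_sq⟩
end

section
/- Let r ≥ 1 and n_1, …, n_r ≥ 1 be integers with n_r ≥ 2, and set N = n_1 + ⋯ + n_r. Define ε_1, …, ε_N ∈ {0, 1} by ε_j = 1 if j ∈ {1, n_1 + 1, n_1 + n_2 + 1, …, n_1 + ⋯ + n_{r−1} + 1} and ε_j = 0 otherwise (i.e. the sequence (ε_1, …, ε_N) consists of a 1 followed by n_1 − 1 zeros, then a 1 followed by n_2 − 1 zeros, and so on). Then the function (t_1, …, t_N) ↦ ∏_{j=1}^N 1/(t_j − ε_j) is integrable on the open simplex {0 < t_1 < ⋯ < t_N < 1} ⊂ ℝ^N, and ζ(n_1, …, n_r) = (−1)^r ∫_{0 < t_1 < ⋯ < t_N < 1} ∏_{j=1}^N dt_j/(t_j − ε_j). -/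
/-!
On the simplex, a factor with `ε_j = 1` equals `-1 / (1 - t_j)`, so `f = (-1)^r ∏ ω_j` where
`ω_j(t) = 1/(1 - t)` at the first position of each block and `1/t` elsewhere; all `ω_j` are
positive there. Integrating out the largest variable `t_M ∈ (0, b)` writes the simplex integral of
`ω_1 ⋯ ω_M` as `∫₀ᵇ ω_M(x) I_{M-1}(x) dx`, and both kinds of forms act simply on the multiple
polylogarithm `Li_e(b) = ∑_{k_1 < ⋯ < k_s} b^{k_s} / ∏ k_j^{e_j}`: integrating `Li_e(x) / x`
raises the last exponent by one, while `Li_e(x) / (1 - x) = ∑_{K > k_s} x^{K-1} / ∏ k_j^{e_j}`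
integrates to `Li_{(e, 1)}`. Hence the simplex integral up to `b` is `Li_n(b)`, which at `b = 1` is
the multiple zeta value. It is finite because `n_r ≥ 2` gives `∏ k_j^{n_j} ≥ (∏ k_j)^{1 + 1/r}`.
-/

open MeasureTheory Set
open scoped ENNReal Finset

namespace MultipleZeta

lemma strictMono_snoc_iff {α : Type*} [Preorder α] {n : ℕ} {f : Fin n → α} {x : α} :
    StrictMono (Fin.snoc f x : Fin (n + 1) → α) ↔ StrictMono f ∧ ∀ i, f i < x := by
  refine ⟨fun h => ⟨fun i j hij => ?_, fun i => ?_⟩, fun ⟨hf, hx⟩ i j hij => ?_⟩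
  · simpa using h (Fin.castSucc_lt_castSucc_iff.2 hij)
  · simpa using h (Fin.castSucc_lt_last i)
  · induction j using Fin.lastCases with
    | last => induction i using Fin.lastCases with
      | last => exact absurd hij (lt_irrefl _)
      | cast i => simpa using hx i
    | cast j => induction i using Fin.lastCases with
      | last => exact absurd hij (not_lt_of_ge (Fin.le_last _))
      | cast i => simpa using hf (Fin.castSucc_lt_castSucc_iff.1 hij)

def orderedSimplex (M : ℕ) (b : ℝ) : Set (Fin M → ℝ) :=
  {t | StrictMono t ∧ ∀ j, t j ∈ Ioo 0 b}

lemma snoc_mem_orderedSimplex_iff {M : ℕ} {b x : ℝ} {t : Fin M → ℝ} :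
    Fin.snoc t x ∈ orderedSimplex (M + 1) b ↔ x ∈ Ioo 0 b ∧ t ∈ orderedSimplex M x := by
  simp only [orderedSimplex, mem_ofPred_eq, strictMono_snoc_iff, Fin.forall_fin_succ',
    Fin.snoc_castSucc, Fin.snoc_last, mem_Ioo]
  constructor
  · rintro ⟨⟨hmono, hlt⟩, hbox, hx⟩
    exact ⟨hx, hmono, fun j => ⟨(hbox j).1, hlt j⟩⟩
  · rintro ⟨hx, hmono, hbox⟩
    exact ⟨⟨hmono, fun j => (hbox j).2⟩, fun j => ⟨(hbox j).1, (hbox j).2.trans hx.2⟩, hx⟩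

lemma orderedSimplex_zero (b : ℝ) : orderedSimplex 0 b = univ :=
  eq_univ_of_forall fun _ => ⟨fun i => i.elim0, fun j => j.elim0⟩

lemma measurableSet_orderedSimplex (M : ℕ) (b : ℝ) : MeasurableSet (orderedSimplex M b) := by
  have h : orderedSimplex M b =
      (⋂ (i) (j) (_ : i < j), {t | t i < t j}) ∩ ⋂ j, (fun t => t j) ⁻¹' Ioo 0 b := by
    ext t; simp [orderedSimplex, StrictMono]
  rw [h]
  exact .inter (.iInter fun i => .iInter fun j => .iInter fun _ =>
      measurableSet_lt (measurable_pi_apply i) (measurable_pi_apply j))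
    (.iInter fun j => measurable_pi_apply j measurableSet_Ioo)

theorem lintegral_orderedSimplex_succ (g : ℕ → ℝ → ℝ≥0∞) (hg : ∀ j, Measurable (g j))
    (M : ℕ) (b : ℝ) :
    ∫⁻ t in orderedSimplex (M + 1) b, ∏ j : Fin (M + 1), g j (t j) =
      ∫⁻ x in Ioo 0 b, g M x * ∫⁻ t in orderedSimplex M x, ∏ j : Fin M, g j (t j) := by
  set e := (MeasurableEquiv.piFinSuccAbove (fun _ => ℝ) (Fin.last M)).symm
  have he : MeasurePreserving e ((volume : Measure ℝ).prod volume) volume :=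
    (volume_preserving_piFinSuccAbove (fun _ => ℝ) (Fin.last M)).symm
  have he_apply : ∀ p, e p = Fin.snoc p.2 p.1 := fun p => Fin.insertNth_last' _ _
  have hmem : ∀ p, p ∈ e ⁻¹' orderedSimplex (M + 1) b ↔
      p.1 ∈ Ioo 0 b ∧ p.2 ∈ orderedSimplex M p.1 := fun p => by
    rw [mem_preimage, he_apply, snoc_mem_orderedSimplex_iff]
  have hmeas : ∀ M, Measurable fun t : Fin M → ℝ => ∏ j : Fin M, g j (t j) := fun M =>
    Finset.measurable_prod _ fun j _ => (hg j).comp (measurable_pi_apply j)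
  have hS := measurableSet_orderedSimplex (M + 1) b
  rw [← he.setLIntegral_comp_preimage_emb e.measurableEmbedding,
    ← lintegral_indicator (e.measurable hS), lintegral_prod,
    ← lintegral_indicator measurableSet_Ioo]
  swap
  · exact (((hmeas _).comp e.measurable).indicator (e.measurable hS)).aemeasurable
  congr with x
  by_cases hx : x ∈ Ioo 0 b
  · rw [indicator_of_mem hx, ← lintegral_const_mul _ (hmeas M),
      ← lintegral_indicator (measurableSet_orderedSimplex M x)]
    congr with t
    by_cases ht : t ∈ orderedSimplex M x
    · rw [indicator_of_mem ((hmem (x, t)).2 ⟨hx, ht⟩), indicator_of_mem ht]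
      simp [he_apply, Fin.prod_univ_castSucc, mul_comm]
    · rw [indicator_of_notMem (fun h => ht ((hmem (x, t)).1 h).2), indicator_of_notMem ht]
  · simp [indicator_of_notMem hx, indicator_of_notMem (fun h => hx ((hmem (x, _)).1 h).1)]

lemma lintegral_Ioo_pow_div {b : ℝ} (hb : 0 ≤ b) (K : ℕ) (D : ℝ) :
    ∫⁻ x in Ioo 0 b, ENNReal.ofReal (x ^ K / D) =
      ENNReal.ofReal (b ^ (K + 1) / ((K + 1) * D)) := by
  have hpow : ∫⁻ x in Ioo 0 b, ENNReal.ofReal (x ^ K) =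
      ENNReal.ofReal (b ^ (K + 1) / (K + 1)) := by
    rw [← ofReal_integral_eq_lintegral_ofReal, ← integral_Ioc_eq_integral_Ioo,
      ← intervalIntegral.integral_of_le hb, integral_pow]
    · simp
    · exact (intervalIntegrable_iff_integrableOn_Ioo_of_le hb).1
        (intervalIntegral.intervalIntegrable_pow K)
    · filter_upwards [ae_restrict_mem measurableSet_Ioo] with x hx using pow_nonneg hx.1.le K
  calc ∫⁻ x in Ioo 0 b, ENNReal.ofReal (x ^ K / D)
      = ∫⁻ x in Ioo 0 b, ENNReal.ofReal (x ^ K) * ENNReal.ofReal D⁻¹ := by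
        refine setLIntegral_congr_fun measurableSet_Ioo fun x hx => ?_
        rw [div_eq_mul_inv, ENNReal.ofReal_mul (pow_nonneg hx.1.le K)]
    _ = ENNReal.ofReal (b ^ (K + 1) / ((K + 1) * D)) := by
        rw [lintegral_mul_const _ (by fun_prop), hpow, ← ENNReal.ofReal_mul (by positivity),
          ← div_eq_mul_inv, div_div]

lemma lintegral_Ioo_inv_mul_pow_div {b : ℝ} (hb : 0 ≤ b) {K : ℕ} (hK : 0 < K) (D : ℝ) :
    ∫⁻ x in Ioo 0 b, ENNReal.ofReal (1 / x) * ENNReal.ofReal (x ^ K / D) =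
      ENNReal.ofReal (b ^ K / (K * D)) := by
  obtain ⟨K, rfl⟩ := Nat.exists_eq_add_one_of_ne_zero hK.ne'
  rw [Nat.cast_add_one, ← lintegral_Ioo_pow_div hb K D]
  refine setLIntegral_congr_fun measurableSet_Ioo fun x hx => ?_
  rw [← ENNReal.ofReal_mul (one_div_pos.2 hx.1).le, pow_succ]
  field_simp [hx.1.ne']

def natEquivPNatGt (K : ℕ) : ℕ ≃ {K' : ℕ+ // K < K'} where
  toFun j := ⟨⟨K + j + 1, by omega⟩, by simp⟩
  invFun K' := K' - K - 1
  left_inv j := by simp; omega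
  right_inv K' := Subtype.ext <| PNat.eq <| by simp; omega

lemma lintegral_Ioo_one_sub_inv_mul_pow_div {b : ℝ} (hb0 : 0 ≤ b) (hb1 : b ≤ 1) (K : ℕ)
    (D : ℝ) :
    ∫⁻ x in Ioo 0 b, ENNReal.ofReal (1 / (1 - x)) * ENNReal.ofReal (x ^ K / D) =
      ∑' K' : {K' : ℕ+ // K < K'}, ENNReal.ofReal (b ^ (K' : ℕ) / (K' * D)) := by
  have hgeom : ∀ x ∈ Ioo 0 b, ENNReal.ofReal (1 / (1 - x)) * ENNReal.ofReal (x ^ K / D) =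
      ∑' j : ℕ, ENNReal.ofReal (x ^ (K + j) / D) := fun x hx => by
    have hx1 : x < 1 := hx.2.trans_le hb1
    have hterm : ∀ j : ℕ, ENNReal.ofReal (x ^ (K + j) / D) =
        ENNReal.ofReal (x ^ j) * ENNReal.ofReal (x ^ K / D) := fun j => by
      rw [← ENNReal.ofReal_mul (pow_nonneg hx.1.le j), pow_add, mul_comm (x ^ K), mul_div_assoc]
    rw [tsum_congr hterm, ENNReal.tsum_mul_right,
      ← ENNReal.ofReal_tsum_of_nonneg (fun j => pow_nonneg hx.1.le j)
        (summable_geometric_of_lt_one hx.1.le hx1),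
      tsum_geometric_of_lt_one hx.1.le hx1, one_div]
  rw [setLIntegral_congr_fun measurableSet_Ioo hgeom, lintegral_tsum (fun j => by fun_prop),
    ← (natEquivPNatGt K).tsum_eq]
  congr with j
  rw [lintegral_Ioo_pow_div hb0]
  simp [natEquivPNatGt, add_assoc]

/-- `0` for the empty tuple, so that "append an index `K > lastEntry k`" needs no case split. -/
def lastEntry : {r : ℕ} → (Fin r → ℕ+) → ℕ
  | 0, _ => 0
  | r + 1, k => k (Fin.last r)

lemma lastEntry_succ {r : ℕ} (k : Fin (r + 1) → ℕ+) : lastEntry k = k (Fin.last r) := rfl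

lemma lastEntry_lt_iff {r : ℕ} {k : Fin r → ℕ+} (hk : StrictMono k) {K : ℕ+} :
    lastEntry k < K ↔ ∀ i, k i < K := by
  cases r with
  | zero => simp [lastEntry]
  | succ r => exact ⟨fun h i => (hk.monotone (Fin.le_last i)).trans_lt h, fun h => h _⟩

noncomputable def multiPolylog {r : ℕ} (e : Fin r → ℕ) (b : ℝ) : ℝ≥0∞ :=
  ∑' k : {k : Fin r → ℕ+ // StrictMono k},
    ENNReal.ofReal (b ^ lastEntry k.1 / ∏ j, (k.1 j : ℝ) ^ e j)

lemma multiPolylog_fin_zero (e : Fin 0 → ℕ) (b : ℝ) : multiPolylog e b = 1 := by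
  rw [multiPolylog, tsum_eq_single ⟨finZeroElim, fun i => i.elim0⟩
    fun k hk => (hk (Subsingleton.elim _ _)).elim]
  simp [lastEntry]

def snocStrictMonoEquiv (r : ℕ) :
    (Σ k : {k : Fin r → ℕ+ // StrictMono k}, {K : ℕ+ // lastEntry k.1 < K}) ≃
      {k : Fin (r + 1) → ℕ+ // StrictMono k} where
  toFun p :=
    ⟨Fin.snoc p.1.1 p.2.1, strictMono_snoc_iff.2 ⟨p.1.2, (lastEntry_lt_iff p.1.2).1 p.2.2⟩⟩
  invFun k :=
    have hk := strictMono_snoc_iff.1 ((Fin.snoc_init_self k.1).symm ▸ k.2)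
    ⟨⟨Fin.init k.1, hk.1⟩, ⟨k.1 (Fin.last r), (lastEntry_lt_iff hk.1).2 hk.2⟩⟩
  left_inv _ := Sigma.subtype_ext (Subtype.ext (Fin.init_snoc (α := fun _ => ℕ+) _ _))
    (Fin.snoc_last (α := fun _ => ℕ+) _ _)
  right_inv k := Subtype.ext (Fin.snoc_init_self k.1)

lemma prod_pow_snoc {r : ℕ} (k : Fin (r + 1) → ℕ+) (e : Fin r → ℕ) (s : ℕ) :
    ∏ j, (k j : ℝ) ^ (Fin.snoc (α := fun _ => ℕ) e s j) =
      (∏ j : Fin r, (k j.castSucc : ℝ) ^ e j) * (k (Fin.last r) : ℝ) ^ s := by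
  simp [Fin.prod_univ_castSucc]

theorem lintegral_one_sub_inv_mul_multiPolylog {r : ℕ} (e : Fin r → ℕ) {b : ℝ} (hb0 : 0 ≤ b)
    (hb1 : b ≤ 1) :
    ∫⁻ x in Ioo 0 b, ENNReal.ofReal (1 / (1 - x)) * multiPolylog e x =
      multiPolylog (Fin.snoc e 1) b := by
  simp_rw [multiPolylog, ← ENNReal.tsum_mul_left]
  rw [lintegral_tsum (fun k => by fun_prop), ← (snocStrictMonoEquiv r).tsum_eq,
    ENNReal.tsum_sigma']
  congr with k
  rw [lintegral_Ioo_one_sub_inv_mul_pow_div hb0 hb1]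
  congr with K
  simp [snocStrictMonoEquiv, lastEntry_succ, prod_pow_snoc, mul_comm]

theorem lintegral_inv_mul_multiPolylog_snoc {r : ℕ} (e : Fin r → ℕ) (s : ℕ) {b : ℝ}
    (hb : 0 ≤ b) :
    ∫⁻ x in Ioo 0 b, ENNReal.ofReal (1 / x) * multiPolylog (Fin.snoc e s) x =
      multiPolylog (Fin.snoc e (s + 1)) b := by
  simp_rw [multiPolylog, ← ENNReal.tsum_mul_left]
  rw [lintegral_tsum (fun k => by fun_prop)]
  congr with k
  rw [lastEntry_succ, lintegral_Ioo_inv_mul_pow_div hb (k.1 (Fin.last r)).pos, prod_pow_snoc,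
    prod_pow_snoc, pow_succ]
  ring_nf

lemma tsum_prod_apply_eq_pow {α : Type*} (h : α → ℝ≥0∞) (n : ℕ) :
    ∑' k : Fin n → α, ∏ i, h (k i) = (∑' a, h a) ^ n := by
  induction n with
  | zero => simp
  | succ n ih =>
    rw [← (Fin.consEquiv fun _ => α).tsum_eq, ENNReal.tsum_prod', pow_succ', ← ih,
      ← ENNReal.tsum_mul_right]
    congr with a
    rw [← ENNReal.tsum_mul_left]
    simp [Fin.prod_univ_succ]

lemma prod_rpow_le_prod_pow {r : ℕ} {a : Fin (r + 1) → ℝ} (ha : ∀ j, 1 ≤ a j)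
    (ha_last : ∀ j, a j ≤ a (Fin.last r)) {e : Fin (r + 1) → ℕ} (he : ∀ j, 1 ≤ e j)
    (he_last : 2 ≤ e (Fin.last r)) :
    (∏ j, a j) ^ (1 + ((r : ℝ) + 1)⁻¹) ≤ ∏ j, a j ^ e j := by
  set P := ∏ j, a j with hP_def
  set L := a (Fin.last r)
  have hP : 0 ≤ P := Finset.prod_nonneg fun j _ => zero_le_one.trans (ha j)
  have hPL : P ≤ L ^ (r + 1) := by
    simpa using Finset.prod_le_prod (s := Finset.univ) (fun j _ => zero_le_one.trans (ha j))
      fun j _ => ha_last j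
  have hroot : P ^ ((r : ℝ) + 1)⁻¹ ≤ L := by
    calc P ^ ((r : ℝ) + 1)⁻¹ ≤ (L ^ (r + 1)) ^ ((r : ℝ) + 1)⁻¹ := by gcongr
      _ = L := by
        exact_mod_cast Real.pow_rpow_inv_natCast (zero_le_one.trans (ha _)) (Nat.succ_ne_zero r)
  calc P ^ (1 + ((r : ℝ) + 1)⁻¹) = P * P ^ ((r : ℝ) + 1)⁻¹ := by
        rw [Real.rpow_add' hP (by positivity), Real.rpow_one]
    _ ≤ P * L := by gcongr
    _ = (∏ j : Fin r, a j.castSucc) * L ^ 2 := by rw [hP_def, Fin.prod_univ_castSucc]; ring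
    _ ≤ (∏ j : Fin r, a j.castSucc ^ e j.castSucc) * L ^ e (Fin.last r) := by
        gcongr with j
        · exact Finset.prod_nonneg fun j _ => pow_nonneg (zero_le_one.trans (ha _)) _
        · exact fun j _ => zero_le_one.trans (ha _)
        · exact le_self_pow₀ (ha _) (Nat.one_le_iff_ne_zero.1 (he _))
        · exact ha _
    _ = ∏ j, a j ^ e j := (Fin.prod_univ_castSucc (fun j => a j ^ e j)).symm

lemma tsum_ofReal_pnat_rpow_lt_top {p : ℝ} (hp : 1 < p) :
    ∑' K : ℕ+, ENNReal.ofReal ((K : ℝ) ^ (-p)) < ∞ :=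
  calc ∑' K : ℕ+, ENNReal.ofReal ((K : ℝ) ^ (-p))
      ≤ ∑' n : ℕ, ENNReal.ofReal ((n : ℝ) ^ (-p)) :=
        ENNReal.tsum_comp_le_tsum_of_injective PNat.coe_injective _
    _ = ENNReal.ofReal (∑' n : ℕ, (n : ℝ) ^ (-p)) :=
        (ENNReal.ofReal_tsum_of_nonneg (fun n => by positivity)
          (Real.summable_nat_rpow.2 (by linarith))).symm
    _ < ∞ := ENNReal.ofReal_lt_top

theorem multiPolylog_one_lt_top {r : ℕ} {e : Fin (r + 1) → ℕ} (he : ∀ j, 1 ≤ e j)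
    (he_last : 2 ≤ e (Fin.last r)) : multiPolylog e 1 < ∞ := by
  set p : ℝ := 1 + ((r : ℝ) + 1)⁻¹
  have hterm : ∀ k : {k : Fin (r + 1) → ℕ+ // StrictMono k},
      ENNReal.ofReal (1 ^ lastEntry k.1 / ∏ j, (k.1 j : ℝ) ^ e j) ≤
        ∏ j, ENNReal.ofReal ((k.1 j : ℝ) ^ (-p)) := fun ⟨k, hk⟩ => by
    have hk1 : ∀ j, (1 : ℝ) ≤ k j := fun j => by exact_mod_cast (k j).pos
    rw [← ENNReal.ofReal_prod_of_nonneg fun j _ => by positivity,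
      Real.finsetProd_rpow _ _ fun j _ => by positivity, Real.rpow_neg (by positivity), one_pow,
      one_div]
    refine ENNReal.ofReal_le_ofReal (inv_anti₀ (by positivity) ?_)
    exact prod_rpow_le_prod_pow hk1 (fun j => by exact_mod_cast hk.monotone (Fin.le_last j))
      he he_last
  calc multiPolylog e 1 ≤ ∑' k : {k : Fin (r + 1) → ℕ+ // StrictMono k},
        ∏ j, ENNReal.ofReal ((k.1 j : ℝ) ^ (-p)) := ENNReal.tsum_le_tsum hterm
    _ ≤ ∑' k : Fin (r + 1) → ℕ+, ∏ j, ENNReal.ofReal ((k j : ℝ) ^ (-p)) :=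
        ENNReal.tsum_comp_le_tsum_of_injective Subtype.val_injective _
    _ = (∑' K : ℕ+, ENNReal.ofReal ((K : ℝ) ^ (-p))) ^ (r + 1) :=
        tsum_prod_apply_eq_pow (fun K : ℕ+ => ENNReal.ofReal ((K : ℝ) ^ (-p))) _
    _ < ∞ := ENNReal.pow_lt_top (tsum_ofReal_pnat_rpow_lt_top (by simp [p]; positivity))

lemma tsum_one_div_prod_pow_eq_toReal {r : ℕ} (e : Fin r → ℕ) :
    ∑' k : {k : Fin r → ℕ+ // StrictMono k}, ∏ i, 1 / (k.1 i : ℝ) ^ e i =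
      (multiPolylog e 1).toReal := by
  rw [multiPolylog, ENNReal.tsum_toReal_eq fun _ => ENNReal.ofReal_ne_top]
  congr with k
  rw [ENNReal.toReal_ofReal (by positivity), one_pow, one_div, ← Finset.prod_inv_distrib]
  simp only [one_div]

lemma prod_one_div_sub_ite {ι : Type*} [Fintype ι] (p : ι → Prop) [DecidablePred p]
    (t : ι → ℝ) :
    ∏ j, 1 / (t j - if p j then 1 else 0) =
      (-1) ^ #{j | p j} * ∏ j, if p j then 1 / (1 - t j) else 1 / t j := by
  have hfactor : ∀ j, 1 / (t j - if p j then 1 else 0) =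
      (if p j then -1 else 1) * if p j then 1 / (1 - t j) else 1 / t j := fun j => by
    split_ifs
    · rw [show t j - 1 = -(1 - t j) by ring, div_neg, neg_one_mul]
    · rw [sub_zero, one_mul]
  rw [Finset.prod_congr rfl fun j _ => hfactor j, Finset.prod_mul_distrib, Finset.prod_ite,
    Finset.prod_const, Finset.prod_const_one, mul_one]

section Composition

variable {ν : ℕ → ℕ}

def partialSum (ν : ℕ → ℕ) (i : ℕ) : ℕ := ∑ j ∈ Finset.range i, ν j

lemma partialSum_succ (ν : ℕ → ℕ) (i : ℕ) : partialSum ν (i + 1) = partialSum ν i + ν i :=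
  Finset.sum_range_succ ν i

lemma strictMono_partialSum (hν : ∀ i, 0 < ν i) : StrictMono (partialSum ν) :=
  strictMono_nat_of_lt_succ fun i => by
    rw [partialSum_succ]; exact Nat.lt_add_of_pos_right (hν i)

lemma partialSum_add_notMem_range (hν : ∀ i, 0 < ν i) {i s : ℕ} (hs0 : 0 < s) (hs : s < ν i) :
    partialSum ν i + s ∉ range (partialSum ν) := by
  rintro ⟨i', hi'⟩
  have h1 : i < i' := (strictMono_partialSum hν).lt_iff_lt.1 (by omega)
  have h2 : i' < i + 1 := (strictMono_partialSum hν).lt_iff_lt.1 (by rw [partialSum_succ]; omega)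
  omega

lemma exists_fin_eq_partialSum_iff (hν : ∀ i, 0 < ν i) {r j : ℕ} (hj : j < partialSum ν r) :
    (∃ i : Fin r, j = partialSum ν i) ↔ j ∈ range (partialSum ν) :=
  ⟨fun ⟨i, h⟩ => ⟨i, h.symm⟩,
    fun ⟨i, h⟩ => ⟨⟨i, (strictMono_partialSum hν).lt_iff_lt.1 (h ▸ hj)⟩, h.symm⟩⟩

lemma card_filter_exists_eq_partialSum (hν : ∀ i, 0 < ν i) {r M : ℕ}
    (hM : partialSum ν r = M) :
    #{j : Fin M | ∃ i : Fin r, (j : ℕ) = partialSum ν i} = r := by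
  subst hM
  let φ : Fin r ↪ Fin (partialSum ν r) :=
    ⟨fun i => ⟨partialSum ν i, (strictMono_partialSum hν).lt_iff_lt.2 i.2⟩,
      fun i i' h => Fin.ext ((strictMono_partialSum hν).injective (Fin.mk.inj_iff.1 h))⟩
  have hφ : ({j : Fin (partialSum ν r) | ∃ i : Fin r, (j : ℕ) = partialSum ν i} :
      Finset (Fin (partialSum ν r))) = Finset.univ.map φ := by
    ext j
    simp only [Finset.mem_filter, Finset.mem_univ, true_and, Finset.mem_map]
    exact ⟨fun ⟨i, h⟩ => ⟨i, Fin.ext h.symm⟩, fun ⟨i, h⟩ => ⟨i, congrArg Fin.val h.symm⟩⟩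
  rw [hφ, Finset.card_map, Finset.card_univ, Fintype.card_fin]

open scoped Classical in
/-- The `j`-th form of the iterated integral attached to the composition `ν = (n₁, n₂, …)`:
the positions `partialSum ν i` are those with `ε = 1`. -/
noncomputable def letterForm (ν : ℕ → ℕ) (j : ℕ) (x : ℝ) : ℝ :=
  if j ∈ range (partialSum ν) then 1 / (1 - x) else 1 / x

@[fun_prop]
lemma measurable_letterForm (ν : ℕ → ℕ) (j : ℕ) : Measurable (letterForm ν j) := by
  unfold letterForm; split_ifs <;> fun_prop

lemma letterForm_nonneg (ν : ℕ → ℕ) (j : ℕ) {x : ℝ} (hx : x ∈ Ioo 0 1) :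
    0 ≤ letterForm ν j x := by
  unfold letterForm
  split_ifs
  · exact one_div_nonneg.2 (sub_nonneg.2 hx.2.le)
  · exact one_div_nonneg.2 hx.1.le

theorem lintegral_orderedSimplex_letterForm (hν : ∀ i, 0 < ν i) (i : ℕ) {b : ℝ} (hb0 : 0 ≤ b)
    (hb1 : b ≤ 1) :
    ∫⁻ t in orderedSimplex (partialSum ν i) b,
        ∏ j : Fin (partialSum ν i), ENNReal.ofReal (letterForm ν j (t j)) =
      multiPolylog (fun j : Fin i => ν j) b := by
  have hg : ∀ j, Measurable fun x => ENNReal.ofReal (letterForm ν j x) := by fun_prop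
  induction i generalizing b with
  | zero =>
    rw [multiPolylog_fin_zero]
    show ∫⁻ t in orderedSimplex 0 b, ∏ j : Fin 0, ENNReal.ofReal (letterForm ν j (t j)) = 1
    simp [orderedSimplex_zero, volume_pi]
  | succ i ih =>
    have hblock : ∀ s, 1 ≤ s → s ≤ ν i → ∀ b, 0 ≤ b → b ≤ 1 →
        ∫⁻ t in orderedSimplex (partialSum ν i + s) b,
            ∏ j : Fin (partialSum ν i + s), ENNReal.ofReal (letterForm ν j (t j)) =
          multiPolylog (Fin.snoc (fun j : Fin i => ν j) s) b := by
      intro s hs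
      induction s, hs using Nat.le_induction with
      | base =>
        intro _ b hb0 hb1
        rw [lintegral_orderedSimplex_succ _ hg,
          ← lintegral_one_sub_inv_mul_multiPolylog _ hb0 hb1]
        refine setLIntegral_congr_fun measurableSet_Ioo fun x hx => ?_
        rw [letterForm, if_pos (mem_range_self i), ih hx.1.le (hx.2.le.trans hb1)]
      | succ s hs ihs =>
        intro hsν b hb0 hb1
        rw [← add_assoc, lintegral_orderedSimplex_succ _ hg,
          ← lintegral_inv_mul_multiPolylog_snoc _ _ hb0]
        refine setLIntegral_congr_fun measurableSet_Ioo fun x hx => ?_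
        rw [letterForm, if_neg (partialSum_add_notMem_range hν (by omega) (by omega)),
          ihs (by omega) x hx.1.le (hx.2.le.trans hb1)]
    rw [partialSum_succ, hblock (ν i) (hν i) le_rfl b hb0 hb1]
    exact congrArg (multiPolylog · b) (Fin.snoc_init_self (fun j : Fin (i + 1) => ν j))

theorem integrableOn_and_integral_prod_letterForm (hν : ∀ i, 0 < ν i) {r M : ℕ}
    (hM : partialSum ν r = M) (hfin : multiPolylog (fun j : Fin r => ν j) 1 ≠ ∞) :
    IntegrableOn (fun t : Fin M → ℝ => ∏ j : Fin M, letterForm ν j (t j))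
        (orderedSimplex M 1) ∧
      ∫ t in orderedSimplex M 1, ∏ j : Fin M, letterForm ν j (t j) =
        (multiPolylog (fun j : Fin r => ν j) 1).toReal := by
  subst hM
  set S := orderedSimplex (partialSum ν r) 1
  have hS : MeasurableSet S := measurableSet_orderedSimplex _ 1
  have hmeas : AEStronglyMeasurable (fun t : Fin (partialSum ν r) → ℝ =>
      ∏ j : Fin (partialSum ν r), letterForm ν j (t j)) (volume.restrict S) :=
    Measurable.aestronglyMeasurable (by fun_prop)
  have hnonneg : ∀ t ∈ S, ∀ j : Fin (partialSum ν r), 0 ≤ letterForm ν j (t j) :=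
    fun t ht j => letterForm_nonneg ν j (ht.2 j)
  have hae : 0 ≤ᵐ[volume.restrict S] fun t => ∏ j : Fin (partialSum ν r), letterForm ν j (t j) :=
    ae_restrict_of_forall_mem hS fun t ht => Finset.prod_nonneg fun j _ => hnonneg t ht j
  have hlint : ∫⁻ t in S, ENNReal.ofReal (∏ j : Fin (partialSum ν r), letterForm ν j (t j)) =
      multiPolylog (fun j : Fin r => ν j) 1 := by
    rw [setLIntegral_congr_fun hS fun t ht =>
      ENNReal.ofReal_prod_of_nonneg fun j _ => hnonneg t ht j]
    exact lintegral_orderedSimplex_letterForm hν r zero_le_one le_rfl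
  refine ⟨(lintegral_ofReal_ne_top_iff_integrable hmeas hae).1 (hlint ▸ hfin), ?_⟩
  rw [integral_eq_lintegral_of_nonneg_ae hae hmeas, hlint]

end Composition

section PadOne

variable {r : ℕ} (n : Fin r → ℕ)

/-- Continuing `n` by ones keeps `partialSum` strictly increasing on all of `ℕ`. -/
def padOne (j : ℕ) : ℕ := if h : j < r then n ⟨j, h⟩ else 1

lemma padOne_fin : (fun j : Fin r => padOne n j) = n := funext fun j => dif_pos j.2

lemma padOne_pos (hn : ∀ i, 0 < n i) (j : ℕ) : 0 < padOne n j := by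
  unfold padOne; split_ifs
  exacts [hn _, one_pos]

lemma partialSum_padOne : partialSum (padOne n) r = ∑ i, n i := by
  rw [partialSum, ← Fin.sum_univ_eq_sum_range, padOne_fin]

lemma sum_Iio_eq_partialSum_padOne (i : Fin r) :
    ∑ i' ∈ Finset.Iio i, n i' = partialSum (padOne n) i := by
  rw [partialSum, ← Nat.Iio_eq_range, ← Fin.map_valEmbedding_Iio, Finset.sum_map]
  exact Finset.sum_congr rfl fun j _ => (congrFun (padOne_fin n) j).symm

theorem prod_one_div_sub_eq_neg_one_pow_mul_letterForm (hn : ∀ i, 0 < n i)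
    (t : Fin (∑ i, n i) → ℝ) :
    ∏ j, 1 / (t j - if ∃ i : Fin r, (j : ℕ) = ∑ i' ∈ Finset.Iio i, n i' then 1 else 0) =
      (-1) ^ r * ∏ j : Fin (∑ i, n i), letterForm (padOne n) j (t j) := by
  have hν := padOne_pos n hn
  have hN := partialSum_padOne n
  simp only [sum_Iio_eq_partialSum_padOne]
  rw [prod_one_div_sub_ite, card_filter_exists_eq_partialSum hν hN]
  refine congrArg _ (Finset.prod_congr rfl fun j _ => ?_)
  classical
  exact if_congr (exists_fin_eq_partialSum_iff hν (j.2.trans_eq hN.symm)) rfl rfl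

end PadOne

end MultipleZeta

open MultipleZeta

/-- Iterated-integral representation of multiple zeta values: for `n₁, …, n_r ≥ 1`
with `n_r ≥ 2` and `N = n₁ + ⋯ + n_r`, letting `ε_j = 1` exactly when `j` (0-indexed)
is one of the partial sums `0, n₁, n₁+n₂, …, n₁+⋯+n_{r−1}` (i.e. the sequence is a `1`
followed by `n₁ − 1` zeros, then a `1` followed by `n₂ − 1` zeros, and so on), the
function `t ↦ ∏_j 1/(t_j − ε_j)` is integrable on the open ordered simplex
`{0 < t₁ < ⋯ < t_N < 1}` and
`ζ(n₁, …, n_r) = (−1)^r ∫_{0 < t₁ < ⋯ < t_N < 1} ∏_j dt_j/(t_j − ε_j)`. -/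
theorem mzv_eq_iterated_integral (r : ℕ) (hr : 0 < r) (n : Fin r → ℕ)
    (hn : ∀ i, 1 ≤ n i) (hlast : 2 ≤ n ⟨r - 1, Nat.sub_lt hr Nat.one_pos⟩) :
    let N : ℕ := ∑ i, n i
    let ε : Fin N → ℝ := fun j =>
      if ∃ i : Fin r, (j : ℕ) = ∑ i' ∈ Finset.Iio i, n i' then 1 else 0
    let S : Set (Fin N → ℝ) := {t | StrictMono t ∧ ∀ j, t j ∈ Set.Ioo (0 : ℝ) 1}
    let f : (Fin N → ℝ) → ℝ := fun t => ∏ j, 1 / (t j - ε j)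
    IntegrableOn f S ∧
    (∑' k : {k : Fin r → ℕ+ // StrictMono k}, ∏ i, (1 : ℝ) / (k.1 i : ℝ) ^ n i)
      = (-1 : ℝ) ^ r * ∫ t in S, f t := by
  intro N ε S f
  obtain ⟨r, rfl⟩ := Nat.exists_eq_add_one_of_ne_zero hr.ne'
  have hS := measurableSet_orderedSimplex N 1
  have hf : EqOn f (fun t => (-1) ^ (r + 1) * ∏ j : Fin N, letterForm (padOne n) j (t j))
      (orderedSimplex N 1) := fun t _ => prod_one_div_sub_eq_neg_one_pow_mul_letterForm n hn t
  have hfin : multiPolylog (fun j : Fin (r + 1) => padOne n j) 1 ≠ ∞ := by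
    rw [padOne_fin]
    exact (multiPolylog_one_lt_top hn hlast).ne
  obtain ⟨hint, hintegral⟩ :=
    integrableOn_and_integral_prod_letterForm (padOne_pos n hn) (partialSum_padOne n) hfin
  refine ⟨IntegrableOn.congr_fun (hint.const_mul _) hf.symm hS, ?_⟩
  change _ = _ * ∫ t in orderedSimplex N 1, f t
  rw [setIntegral_congr_fun hS hf, integral_const_mul, hintegral, padOne_fin,
    tsum_one_div_prod_pow_eq_toReal, ← mul_assoc, ← pow_add, Even.neg_one_pow ⟨_, rfl⟩, one_mul]
end

section
/- Let G be a finite connected simple graph and let γ be a connected subgraph of G with vertex set V(γ) (nonempty) and edge set E(γ). Then for every spanning tree T of G, the number of edges of γ not contained in T satisfies |E(γ) ∖ E(T)| ≥ h_γ := |E(γ)| − |V(γ)| + 1. Consequently, every monomial of the first Symanzik polynomial Ψ_G = Σ_T ∏_{e ∈ E(G) ∖ E(T)} X_e has total degree at least h_γ in the variables {X_e : e ∈ E(γ)}. -/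
open scoped Classical
open MvPolynomial

/-!
The edges of `γ` lying in a spanning tree `T` form a forest on the vertex set of `γ`, so there
are at most `|V(γ)| - 1` of them, and at least `h_γ` edges of `γ` lie outside `T`. The monomial
of `Ψ_G` indexed by `T` is the squarefree monomial on `E(G) ∖ E(T)`, whose degree in the
variables of `γ` is exactly `|E(γ) ∖ E(T)|`.
-/

namespace SimpleGraph

variable {W V : Type*}

theorem IsAcyclic.natCard_edgeSet_add_one_le [Finite W] [Nonempty W] {A : SimpleGraph W}
    (hA : A.IsAcyclic) : Nat.card A.edgeSet + 1 ≤ Nat.card W := by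
  obtain ⟨T, hAT, -, hT⟩ := connected_top.exists_isTree_le_of_le_of_isAcyclic le_top hA
  rw [← (isTree_iff_connected_and_card.mp hT).2, add_le_add_iff_right,
    Nat.card_coe_set_eq, Nat.card_coe_set_eq]
  exact Set.ncard_le_ncard (edgeSet_mono hAT) (Set.toFinite _)

theorem IsAcyclic.ncard_inter_edgeSet_add_one_le {G F : SimpleGraph V} (hF : F.IsAcyclic)
    (H : G.Subgraph) [Finite H.verts] (hne : H.verts.Nonempty) :
    (H.edgeSet ∩ F.edgeSet).ncard + 1 ≤ H.verts.ncard := by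
  set K := H.deleteEdges F.edgeSetᶜ
  have hK : K.edgeSet = H.edgeSet ∩ F.edgeSet := by
    ext e
    induction e using Sym2.ind
    simp [K]
  have hKF : K.coe.IsAcyclic :=
    hF.comap ⟨Subtype.val, fun h => by simpa using h.2⟩ Subtype.val_injective
  have : Finite K.verts := ‹Finite H.verts›
  have : Nonempty K.verts := hne.to_subtype
  rw [← hK, ← Subgraph.image_coe_edgeSet_coe,
    Set.ncard_image_of_injective _ (Sym2.map.injective Subtype.val_injective),
    ← Nat.card_coe_set_eq, ← Nat.card_coe_set_eq]
  exact hKF.natCard_edgeSet_add_one_le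

end SimpleGraph

namespace MvPolynomial

variable {σ ι R : Type*} [CommSemiring R]

theorem exists_eq_of_mem_support_sum_prod_X {s : Finset ι} {f : ι → Finset σ} {m : σ →₀ ℕ}
    (hm : m ∈ (∑ i ∈ s, ∏ e ∈ f i, X e : MvPolynomial σ R).support) :
    ∃ i ∈ s, m = ∑ e ∈ f i, Finsupp.single e 1 := by
  obtain ⟨i, hi, hmi⟩ := Finset.mem_biUnion.mp (support_sum hm)
  simp only [X, ← monomial_sum_one] at hmi
  exact ⟨i, hi, Finset.mem_singleton.mp (support_monomial_subset hmi)⟩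

end MvPolynomial

namespace Finsupp

variable {σ : Type*} [DecidableEq σ]

theorem finset_sum_single_one_apply (S : Finset σ) (e : σ) :
    (∑ i ∈ S, single i 1 : σ →₀ ℕ) e = if e ∈ S then 1 else 0 := by
  simp [finsetSum_apply, single_apply]

theorem support_finset_sum_single_one (S : Finset σ) :
    (∑ i ∈ S, single i 1 : σ →₀ ℕ).support = S := by
  ext e
  simp [finset_sum_single_one_apply]

theorem sum_filter_support_finset_sum_single_one (S : Finset σ) (p : σ → Prop)
    [DecidablePred p] :
    ∑ e ∈ (∑ i ∈ S, single i 1 : σ →₀ ℕ).support.filter p, (∑ i ∈ S, single i 1 : σ →₀ ℕ) e =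
      (S.filter p).card := by
  rw [support_finset_sum_single_one, Finset.card_eq_sum_ones]
  refine Finset.sum_congr rfl fun e he => ?_
  simp [finset_sum_single_one_apply, (Finset.mem_filter.mp he).1]

end Finsupp

theorem symanzik_min_degree_in_subgraph_variables_general (V : Type) [Fintype V] [DecidableEq V]
    (G : SimpleGraph V) [Fintype G.edgeSet]
    (H : G.Subgraph) (hne : H.verts.Nonempty) :
    let hγ : ℕ := H.edgeSet.ncard + 1 - H.verts.ncard
    let trees : Finset (Finset (Sym2 V)) :=
      G.edgeFinset.powerset.filter
        (fun T => (SimpleGraph.fromEdgeSet (T : Set (Sym2 V))).IsTree)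
    let Ψ : MvPolynomial (Sym2 V) ℚ :=
      ∑ T ∈ trees, ∏ e ∈ G.edgeFinset \ T, X e
    (∀ T ∈ trees, hγ ≤ (H.edgeSet \ (T : Set (Sym2 V))).ncard) ∧
    ∀ m ∈ Ψ.support, hγ ≤ ∑ e ∈ m.support.filter (fun e => e ∈ H.edgeSet), m e := by
  intro hγ trees Ψ
  have hloops : ∀ T ∈ trees, hγ ≤ (H.edgeSet \ (T : Set (Sym2 V))).ncard := by
    intro T hT
    have hforest := (Finset.mem_filter.mp hT).2.isAcyclic.ncard_inter_edgeSet_add_one_le H hne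
    have hinter : H.edgeSet ∩ (SimpleGraph.fromEdgeSet (T : Set (Sym2 V))).edgeSet =
        H.edgeSet ∩ T := by
      ext e
      induction e using Sym2.ind
      simpa [SimpleGraph.edgeSet_fromEdgeSet] using fun h _ => (H.adj_sub h).ne
    have hsplit := Set.ncard_inter_add_ncard_sdiff_eq_ncard H.edgeSet (T : Set (Sym2 V))
      ((Set.toFinite G.edgeSet).subset H.edgeSet_subset)
    rw [hinter] at hforest
    omega
  refine ⟨hloops, fun m hm => ?_⟩
  obtain ⟨T, hT, rfl⟩ := exists_eq_of_mem_support_sum_prod_X hm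
  rw [Finsupp.sum_filter_support_finset_sum_single_one, ← Set.ncard_coe_finset]
  convert hloops T hT using 2
  ext e
  simp +contextual [and_comm, H.edgeSet_subset _]

/-- Let `γ` (formalized as a subgraph `H` of `G`) be a connected subgraph of a finite
connected simple graph `G`, with nonempty vertex set.  Then for every spanning tree `T`
of `G` (identified with its edge set), `|E(γ) ∖ E(T)| ≥ h_γ = |E(γ)| − |V(γ)| + 1`.
Consequently every monomial of the first Symanzik polynomial
`Ψ_G = Σ_T ∏_{e ∉ E(T)} X_e` has total degree at least `h_γ` in the variables
`{X_e : e ∈ E(γ)}`. -/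
theorem symanzik_min_degree_in_subgraph_variables (V : Type) [Fintype V] [DecidableEq V]
    (G : SimpleGraph V) [Fintype G.edgeSet] (hG : G.Connected)
    (H : G.Subgraph) (hH : H.Connected) (hne : H.verts.Nonempty) :
    let hγ : ℕ := H.edgeSet.ncard + 1 - H.verts.ncard
    let trees : Finset (Finset (Sym2 V)) :=
      G.edgeFinset.powerset.filter
        (fun T => (SimpleGraph.fromEdgeSet (T : Set (Sym2 V))).IsTree)
    let Ψ : MvPolynomial (Sym2 V) ℚ :=
      ∑ T ∈ trees, ∏ e ∈ G.edgeFinset \ T, X e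
    (∀ T ∈ trees, hγ ≤ (H.edgeSet \ (T : Set (Sym2 V))).ncard) ∧
    ∀ m ∈ Ψ.support, hγ ≤ ∑ e ∈ m.support.filter (fun e => e ∈ H.edgeSet), m e :=
  symanzik_min_degree_in_subgraph_variables_general V G H hne
end

section
/- Let G be a finite connected simple graph and let γ be a connected subgraph of G with vertex set V(γ) and edge set E(γ). Fix any spanning tree T₀ of γ and let 𝒮 = {F ⊆ E(G) ∖ E(γ) : E(T₀) ∪ F is the edge set of a spanning tree of G} (this set does not depend on the choice of T₀). Then in the polynomial ring ℚ[X_e : e ∈ E(G)] one has the identity Σ_{T : |E(T) ∩ E(γ)| = |V(γ)| − 1} ∏_{e ∈ E(G) ∖ E(T)} X_e = Ψ_γ · ( Σ_{F ∈ 𝒮} ∏_{e ∈ (E(G) ∖ E(γ)) ∖ F} X_e ), where the left-hand sum is over all spanning trees T of G whose intersection with E(γ) has exactly |V(γ)| − 1 edges, and Ψ_γ = Σ_{T'} ∏_{e ∈ E(γ) ∖ E(T')} X_e is the first Symanzik polynomial of γ (sum over spanning trees T' of γ). In other words, the part of Ψ_G of lowest degree in the variables {X_e : e ∈ E(γ)}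 factorizes as Ψ_γ · Ψ_{G/γ}, which is the partial factorization Ψ_G = Ψ_γ Ψ_{G/γ} + R_{γ,G} with R_{γ,G} of strictly higher degree in the γ-edge variables. -/
/-!
A spanning tree `T` of `G` with `|T ∩ E(γ)| = |V(γ)| - 1` splits into `T ∩ E(γ)` and `T ∖ E(γ)`.
An acyclic edge set inside `V(γ)` connects `V(γ)` exactly when it has `|V(γ)| - 1` edges, so
`T ∩ E(γ)` is a spanning tree of `γ`. Exchanging `T ∩ E(γ)` for `T₀` (or back) keeps the edge
count, and keeps connectivity because both edge sets connect all of `V(γ)`; hence `T ∖ E(γ) ∈ 𝒮`,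
and conversely `T' ∪ F` is a spanning tree of `G` for every spanning tree `T'` of `γ` and `F ∈ 𝒮`.
So `T ↦ (T ∩ E(γ), T ∖ E(γ))` is a bijection onto pairs, under which the monomial of `T` is the
product of the monomials of its two parts.
-/

namespace SimpleGraph

variable {V : Type*}

theorem IsAcyclic.isTree_iff_card [Finite V] {Γ : SimpleGraph V} (hΓ : Γ.IsAcyclic) :
    Γ.IsTree ↔ Nat.card Γ.edgeSet + 1 = Nat.card V := by
  refine ⟨fun h => (isTree_iff_connected_and_card.1 h).2, fun hcard => ?_⟩
  have : Nonempty V := (Nat.card_pos_iff.1 (by omega)).1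
  obtain ⟨T, hΓT, -, hT⟩ := connected_top.exists_isTree_le_of_le_of_isAcyclic le_top hΓ
  suffices Γ.edgeSet = T.edgeSet from edgeSet_inj.1 this ▸ hT
  refine Set.eq_of_subset_of_ncard_le (edgeSet_mono hΓT) ?_ (Set.toFinite _)
  rw [← Nat.card_coe_set_eq, ← Nat.card_coe_set_eq]
  have := (isTree_iff_connected_and_card.1 hT).2
  omega

theorem preconnected_induce_iff_of_support_subset {Γ : SimpleGraph V} {A : Set V}
    (h : Γ.support ⊆ A) :
    (Γ.induce A).Preconnected ↔ ∀ v ∈ A, ∀ w ∈ A, Γ.Reachable v w := by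
  refine ⟨fun hc v hv w hw => (hc ⟨v, hv⟩ ⟨w, hw⟩).map (Embedding.induce A).toHom,
    fun hr => ?_⟩
  rintro ⟨v, hv⟩ ⟨w, hw⟩
  obtain rfl | hvw := eq_or_ne v w
  · rfl
  obtain ⟨p⟩ := hr v hv w hw
  exact ⟨p.induce A fun x hx =>
    h (mem_support_of_mem_walk_support p (Walk.not_nil_of_ne hvw) hx)⟩

theorem card_edgeSet_induce_of_support_subset [Finite V] {Γ : SimpleGraph V} {A : Set V}
    (h : Γ.support ⊆ A) : Nat.card (Γ.induce A).edgeSet = Nat.card Γ.edgeSet := by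
  classical
  have := Fintype.ofFinite V
  simp only [Nat.card_eq_fintype_card, ← edgeFinset_card]
  convert card_edgeFinset_induce_of_support_subset h

theorem IsAcyclic.forall_reachable_iff_card [Finite V] {Γ : SimpleGraph V} {A : Set V}
    (hΓ : Γ.IsAcyclic) (hA : A.Nonempty) (h : Γ.support ⊆ A) :
    (∀ v ∈ A, ∀ w ∈ A, Γ.Reachable v w) ↔ Nat.card Γ.edgeSet + 1 = A.ncard := by
  have : Nonempty A := hA.to_subtype
  have hΓA := hΓ.induce A
  rw [← preconnected_induce_iff_of_support_subset h, ← card_edgeSet_induce_of_support_subset h,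
    ← Nat.card_coe_set_eq, ← hΓA.isTree_iff_card]
  exact ⟨fun hc => ⟨⟨hc⟩, hΓA⟩, fun ht => ht.connected.preconnected⟩

theorem card_edgeSet_fromEdgeSet {s : Finset (Sym2 V)} (hs : ∀ e ∈ s, ¬ e.IsDiag) :
    Nat.card (fromEdgeSet (s : Set (Sym2 V))).edgeSet = s.card := by
  rw [edgeSet_fromEdgeSet, sdiff_eq_left.2, Nat.card_coe_set_eq, Set.ncard_coe_finset]
  exact Set.disjoint_left.2 fun e he => hs e he

theorem Reachable.of_forall_adj {Γ Γ' : SimpleGraph V}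
    (h : ∀ ⦃v w⦄, Γ.Adj v w → Γ'.Reachable v w) {v w : V} (hvw : Γ.Reachable v w) :
    Γ'.Reachable v w := by
  rw [reachable_eq_reflTransGen] at *
  exact Relation.reflTransGen_closed h _ _ hvw

section EdgeSets

variable {A : Set V} {s t u : Finset (Sym2 V)}

theorem connected_fromEdgeSet_union_of_reachable [DecidableEq V]
    (hsu : (fromEdgeSet ((s ∪ u : Finset (Sym2 V)) : Set (Sym2 V))).Connected)
    (hst : ∀ ⦃v w⦄, (fromEdgeSet (s : Set (Sym2 V))).Adj v w →
      (fromEdgeSet (t : Set (Sym2 V))).Reachable v w) :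
    (fromEdgeSet ((t ∪ u : Finset (Sym2 V)) : Set (Sym2 V))).Connected := by
  have := hsu.nonempty
  refine ⟨fun v w => (hsu.preconnected v w).of_forall_adj fun x y hxy => ?_⟩
  rw [fromEdgeSet_adj, Finset.coe_union, Set.mem_union] at hxy
  obtain ⟨hxy | hxy, hne⟩ := hxy
  · exact (hst ((fromEdgeSet_adj _).2 ⟨hxy, hne⟩)).mono (fromEdgeSet_mono (by simp))
  · exact ((fromEdgeSet_adj _).2 ⟨by simp [hxy], hne⟩).reachable

theorem isTree_union_of_card_eq [Finite V] [DecidableEq V]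
    (hsu : (fromEdgeSet ((s ∪ u : Finset (Sym2 V)) : Set (Sym2 V))).IsTree)
    (hst : ∀ ⦃v w⦄, (fromEdgeSet (s : Set (Sym2 V))).Adj v w →
      (fromEdgeSet (t : Set (Sym2 V))).Reachable v w)
    (hcard : s.card = t.card) (hs : Disjoint s u) (ht : Disjoint t u)
    (hsnd : ∀ e ∈ s ∪ u, ¬ e.IsDiag) (htnd : ∀ e ∈ t ∪ u, ¬ e.IsDiag) :
    (fromEdgeSet ((t ∪ u : Finset (Sym2 V)) : Set (Sym2 V))).IsTree := by
  have hsu' := isTree_iff_connected_and_card.1 hsu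
  rw [card_edgeSet_fromEdgeSet hsnd, Finset.card_union_of_disjoint hs] at hsu'
  refine isTree_iff_connected_and_card.2
    ⟨connected_fromEdgeSet_union_of_reachable hsu'.1 hst, ?_⟩
  rw [card_edgeSet_fromEdgeSet htnd, Finset.card_union_of_disjoint ht]
  omega

/-- `s` is the edge set of a spanning tree of the vertex set `A`, provided the edges of `s` have
their endpoints in `A`. -/
def IsTreeOn (s : Finset (Sym2 V)) (A : Set V) : Prop :=
  (fromEdgeSet (s : Set (Sym2 V))).IsAcyclic ∧
    ∀ v ∈ A, ∀ w ∈ A, (fromEdgeSet (s : Set (Sym2 V))).Reachable v w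

theorem IsTreeOn.reachable_of_adj (ht : IsTreeOn t A)
    (hsA : (fromEdgeSet (s : Set (Sym2 V))).support ⊆ A) {v w : V}
    (h : (fromEdgeSet (s : Set (Sym2 V))).Adj v w) :
    (fromEdgeSet (t : Set (Sym2 V))).Reachable v w :=
  ht.2 v (hsA ⟨w, h⟩) w (hsA ⟨v, h.symm⟩)

theorem isTreeOn_iff [Finite V] (hA : A.Nonempty) (hs : ∀ e ∈ s, ¬ e.IsDiag)
    (hsA : (fromEdgeSet (s : Set (Sym2 V))).support ⊆ A) :
    IsTreeOn s A ↔ (fromEdgeSet (s : Set (Sym2 V))).IsAcyclic ∧ s.card + 1 = A.ncard :=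
  and_congr_right fun hac => by
    rw [hac.forall_reachable_iff_card hA hsA, card_edgeSet_fromEdgeSet hs]

theorem isTree_and_card_inter_iff [Finite V] [DecidableEq V] {D T₀ T : Finset (Sym2 V)}
    (hA : A.Nonempty) (hDA : (fromEdgeSet (D : Set (Sym2 V))).support ⊆ A)
    (hD : ∀ e ∈ D, ¬ e.IsDiag) (hT : ∀ e ∈ T, ¬ e.IsDiag) (hT₀D : T₀ ⊆ D)
    (hT₀ : IsTreeOn T₀ A) :
    (fromEdgeSet (T : Set (Sym2 V))).IsTree ∧ (T ∩ D).card = A.ncard - 1 ↔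
      IsTreeOn (T ∩ D) A ∧
        (fromEdgeSet ((T₀ ∪ T \ D : Finset (Sym2 V)) : Set (Sym2 V))).IsTree := by
  have hsuppA : ∀ s ⊆ D, (fromEdgeSet (s : Set (Sym2 V))).support ⊆ A := fun s hs =>
    (support_mono (fromEdgeSet_mono (by exact_mod_cast hs))).trans hDA
  have hTD : T ∩ D ⊆ D := Finset.inter_subset_right
  have hTsplit : T ∩ D ∪ T \ D = T := sup_inf_sdiff T D
  have hdisj : Disjoint D (T \ D) := Finset.disjoint_sdiff
  have hTnd : ∀ e ∈ T ∩ D ∪ T \ D, ¬ e.IsDiag := by rwa [hTsplit]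
  have hT₀Tnd : ∀ e ∈ T₀ ∪ T \ D, ¬ e.IsDiag := Finset.forall_mem_union.2
    ⟨fun e he => hD e (hT₀D he), fun e he => hT e (Finset.sdiff_subset he)⟩
  have hT₀card :=
    ((isTreeOn_iff hA (fun e he => hD e (hT₀D he)) (hsuppA T₀ hT₀D)).1 hT₀).2
  have hTDiff := isTreeOn_iff hA (fun e he => hD e (hTD he)) (hsuppA _ hTD)
  constructor
  · rintro ⟨hTtree, hcard⟩
    have hTD' : IsTreeOn (T ∩ D) A :=
      hTDiff.2 ⟨hTtree.isAcyclic.anti (fromEdgeSet_mono (by simp)), by omega⟩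
    exact ⟨hTD', isTree_union_of_card_eq (by rwa [hTsplit])
      (fun _ _ => hT₀.reachable_of_adj (hsuppA _ hTD)) (by omega)
      (hdisj.mono_left hTD) (hdisj.mono_left hT₀D) hTnd hT₀Tnd⟩
  · rintro ⟨hTD', htree⟩
    have hcard := (hTDiff.1 hTD').2
    refine ⟨?_, by omega⟩
    rw [← hTsplit]
    exact isTree_union_of_card_eq htree (fun _ _ => hTD'.reachable_of_adj (hsuppA T₀ hT₀D))
      (by omega) (hdisj.mono_left hT₀D) (hdisj.mono_left hTD) hT₀Tnd hTnd

end EdgeSets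

end SimpleGraph

theorem Finset.sum_filter_powerset_prod_sdiff_eq_mul {ι R : Type*} [DecidableEq ι]
    [CommSemiring R] {E D : Finset ι} (hD : D ⊆ E) {P Q S : Finset ι → Prop}
    [DecidablePred P] [DecidablePred Q] [DecidablePred S]
    (hP : ∀ T ⊆ E, P T ↔ Q (T ∩ D) ∧ S (T \ D)) (f : ι → R) :
    ∑ T ∈ E.powerset.filter P, ∏ e ∈ E \ T, f e =
      (∑ T ∈ D.powerset.filter Q, ∏ e ∈ D \ T, f e) *
        ∑ F ∈ (E \ D).powerset.filter S, ∏ e ∈ (E \ D) \ F, f e := by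
  have hsplit : ∀ T ⊆ D, ∀ F ⊆ E \ D, (T ∪ F) ∩ D = T ∧ (T ∪ F) \ D = F := by
    intro T hT F hF
    constructor <;> ext e <;> have := @hT e <;> have := @hF e <;> simp at * <;> tauto
  rw [sum_mul_sum, ← sum_product']
  refine sum_nbij' (fun T => (T ∩ D, T \ D)) (fun p => p.1 ∪ p.2) ?_ ?_ ?_ ?_ ?_
  · intro T hT
    rw [mem_filter, mem_powerset] at hT
    have := (hP T hT.1).1 hT.2
    simp only [mem_product, mem_filter, mem_powerset]
    exact ⟨⟨inter_subset_right, this.1⟩, sdiff_subset_sdiff hT.1 subset_rfl, this.2⟩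
  · rintro ⟨T, F⟩ hTF
    simp only [mem_product, mem_filter, mem_powerset] at hTF
    obtain ⟨⟨hT, hTQ⟩, hF, hFS⟩ := hTF
    have hTFE : T ∪ F ⊆ E := union_subset (hT.trans hD) (hF.trans sdiff_subset)
    rw [mem_filter, mem_powerset, hP _ hTFE, (hsplit T hT F hF).1, (hsplit T hT F hF).2]
    exact ⟨hTFE, hTQ, hFS⟩
  · intro T _
    exact sup_inf_sdiff T D
  · rintro ⟨T, F⟩ hTF
    simp only [mem_product, mem_filter, mem_powerset] at hTF
    exact Prod.ext (hsplit T hTF.1.1 F hTF.2.1).1 (hsplit T hTF.1.1 F hTF.2.1).2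
  · intro T _
    rw [← prod_union]
    · congr 1
      ext e
      have := @hD e
      simp only [mem_sdiff, mem_union, mem_inter]
      tauto
    · exact disjoint_left.2 fun e he he' =>
        (mem_sdiff.1 (mem_sdiff.1 he').1).2 (mem_sdiff.1 he).1

open scoped Classical
open MvPolynomial

theorem symanzik_partial_factorization_general (V : Type) [Fintype V] [DecidableEq V]
    (G : SimpleGraph V) [Fintype G.edgeSet]
    (H : G.Subgraph) (hH : H.Connected)
    (T₀ : Finset (Sym2 V)) (hT₀sub : (T₀ : Set (Sym2 V)) ⊆ H.edgeSet)
    (hT₀ac : (SimpleGraph.fromEdgeSet (T₀ : Set (Sym2 V))).IsAcyclic)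
    (hT₀conn : ∀ v ∈ H.verts, ∀ w ∈ H.verts,
      (SimpleGraph.fromEdgeSet (T₀ : Set (Sym2 V))).Reachable v w) :
    let Eγ : Finset (Sym2 V) := G.edgeFinset.filter (fun e => e ∈ H.edgeSet)
    let treesG : Finset (Finset (Sym2 V)) :=
      G.edgeFinset.powerset.filter
        (fun T => (SimpleGraph.fromEdgeSet (T : Set (Sym2 V))).IsTree)
    let treesγ : Finset (Finset (Sym2 V)) :=
      Eγ.powerset.filter
        (fun T' => (SimpleGraph.fromEdgeSet (T' : Set (Sym2 V))).IsAcyclic ∧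
          ∀ v ∈ H.verts, ∀ w ∈ H.verts,
            (SimpleGraph.fromEdgeSet (T' : Set (Sym2 V))).Reachable v w)
    let 𝒮 : Finset (Finset (Sym2 V)) :=
      (G.edgeFinset \ Eγ).powerset.filter
        (fun F => (SimpleGraph.fromEdgeSet ((T₀ ∪ F : Finset (Sym2 V)) : Set (Sym2 V))).IsTree)
    (∑ T ∈ treesG.filter (fun T => (T ∩ Eγ).card = H.verts.ncard - 1),
        ∏ e ∈ G.edgeFinset \ T, (X e : MvPolynomial (Sym2 V) ℚ))
      = (∑ T' ∈ treesγ, ∏ e ∈ Eγ \ T', (X e : MvPolynomial (Sym2 V) ℚ))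
        * ∑ F ∈ 𝒮, ∏ e ∈ (G.edgeFinset \ Eγ) \ F, (X e : MvPolynomial (Sym2 V) ℚ) := by
  intro Eγ treesG treesγ 𝒮
  have hEγG : Eγ ⊆ G.edgeFinset := Finset.filter_subset _ _
  have hnd : ∀ e ∈ G.edgeFinset, ¬ e.IsDiag := fun e he =>
    G.not_isDiag_of_mem_edgeSet (SimpleGraph.mem_edgeFinset.1 he)
  have hEγA : (SimpleGraph.fromEdgeSet (Eγ : Set (Sym2 V))).support ⊆ H.verts := by
    intro v hv
    obtain ⟨w, hvw⟩ := (SimpleGraph.mem_support _).1 hv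
    rw [SimpleGraph.fromEdgeSet_adj] at hvw
    exact (Finset.mem_filter.1 hvw.1).2.fst_mem
  have hT₀Eγ : T₀ ⊆ Eγ := fun e he =>
    Finset.mem_filter.2 ⟨SimpleGraph.mem_edgeFinset.2 (H.edgeSet_subset (hT₀sub he)), hT₀sub he⟩
  rw [Finset.filter_filter]
  exact Finset.sum_filter_powerset_prod_sdiff_eq_mul hEγG (fun T hT =>
    SimpleGraph.isTree_and_card_inter_iff hH.nonempty hEγA (fun e he => hnd e (hEγG he))
      (fun e he => hnd e (hT he)) hT₀Eγ ⟨hT₀ac, hT₀conn⟩) _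

/-- Partial factorization of the graph polynomial `Ψ_G = Ψ_γ Ψ_{G/γ} + R_{γ,G}`:
for a connected subgraph `γ` (formalized as a subgraph `H` of `G`) of a finite
connected simple graph `G`, and any fixed spanning tree `T₀` of `γ`, the sum of the
monomials `∏_{e ∉ E(T)} X_e` of `Ψ_G` over the spanning trees `T` of `G` with
`|E(T) ∩ E(γ)| = |V(γ)| − 1` (the part of `Ψ_G` of lowest degree in the `γ`-edge
variables) equals `Ψ_γ · Σ_{F ∈ 𝒮} ∏_{e ∈ (E(G)∖E(γ))∖F} X_e`, where
`𝒮 = {F ⊆ E(G)∖E(γ) : E(T₀) ∪ F is the edge set of a spanning tree of G}`. -/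
theorem symanzik_partial_factorization (V : Type) [Fintype V] [DecidableEq V]
    (G : SimpleGraph V) [Fintype G.edgeSet] (hG : G.Connected)
    (H : G.Subgraph) (hH : H.Connected)
    (T₀ : Finset (Sym2 V)) (hT₀sub : (T₀ : Set (Sym2 V)) ⊆ H.edgeSet)
    (hT₀ac : (SimpleGraph.fromEdgeSet (T₀ : Set (Sym2 V))).IsAcyclic)
    (hT₀conn : ∀ v ∈ H.verts, ∀ w ∈ H.verts,
      (SimpleGraph.fromEdgeSet (T₀ : Set (Sym2 V))).Reachable v w) :
    let Eγ : Finset (Sym2 V) := G.edgeFinset.filter (fun e => e ∈ H.edgeSet)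
    let treesG : Finset (Finset (Sym2 V)) :=
      G.edgeFinset.powerset.filter
        (fun T => (SimpleGraph.fromEdgeSet (T : Set (Sym2 V))).IsTree)
    let treesγ : Finset (Finset (Sym2 V)) :=
      Eγ.powerset.filter
        (fun T' => (SimpleGraph.fromEdgeSet (T' : Set (Sym2 V))).IsAcyclic ∧
          ∀ v ∈ H.verts, ∀ w ∈ H.verts,
            (SimpleGraph.fromEdgeSet (T' : Set (Sym2 V))).Reachable v w)
    let 𝒮 : Finset (Finset (Sym2 V)) :=
      (G.edgeFinset \ Eγ).powerset.filter
        (fun F => (SimpleGraph.fromEdgeSet ((T₀ ∪ F : Finset (Sym2 V)) : Set (Sym2 V))).IsTree)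
    (∑ T ∈ treesG.filter (fun T => (T ∩ Eγ).card = H.verts.ncard - 1),
        ∏ e ∈ G.edgeFinset \ T, (X e : MvPolynomial (Sym2 V) ℚ))
      = (∑ T' ∈ treesγ, ∏ e ∈ Eγ \ T', (X e : MvPolynomial (Sym2 V) ℚ))
        * ∑ F ∈ 𝒮, ∏ e ∈ (G.edgeFinset \ Eγ) \ F, (X e : MvPolynomial (Sym2 V) ℚ) :=
  symanzik_partial_factorization_general V G H hH T₀ hT₀sub hT₀ac hT₀conn
end

section
/- The set of all finite ℚ-linear combinations of 1 and of multiple zeta values ζ(n_1, …, n_r) (over all r ≥ 1 and integers n_1, …, n_r ≥ 1 with n_r ≥ 2) is a ℚ-subalgebra of ℝ; in particular, the product of any two multiple zeta values is a ℚ-linear combination of multiple zeta values. -/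
/-!
Truncate the multiple zeta series to summation indices `< N`. Splitting the double sum over
the two largest indices `K`, `L` of a product of two truncations into the parts `K > L`, `K < L`
and `K = L` turns the product into the sum of the truncations over the stuffle of the two
index words; this is an exact identity of finite sums. For admissible words the series converge
absolutely: as `k_r ≥ k_i` for every `i`, `∏ k_i ^ n_i ≥ k_r ∏ k_i ≥ (∏ k_i) ^ (1 + 1/r)`, which
is dominated by a product of convergent `p`-series. Letting `N → ∞` gives
`ζ(u) ζ(v) = ∑_{w ∈ u * v} ζ(w)`, and the stuffle of admissible words consists of admissible
words.
-/

open Finset Filter Topology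

/-- The set of multiple zeta values `ζ(n₁, …, n_r)` for `r ≥ 1`, `n₁, …, n_r ≥ 1`
and `n_r ≥ 2`. -/
def mzvSet : Set ℝ :=
  {x : ℝ | ∃ (r : ℕ) (hr : 0 < r) (n : Fin r → ℕ),
    (∀ i, 1 ≤ n i) ∧ 2 ≤ n ⟨r - 1, Nat.sub_lt hr Nat.one_pos⟩ ∧
    x = ∑' k : {k : Fin r → ℕ+ // StrictMono k}, ∏ i, (1 : ℝ) / (k.1 i : ℝ) ^ n i}

def stuffle : List ℕ → List ℕ → List (List ℕ)
  | [], v => [v]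
  | a :: u, [] => [a :: u]
  | a :: u, b :: v =>
      (stuffle u (b :: v)).map (a :: ·) ++ (stuffle (a :: u) v).map (b :: ·) ++
        (stuffle u v).map ((a + b) :: ·)

theorem forall_mem_stuffle {P : ℕ → Prop} (hP : ∀ a b, P a → P b → P (a + b))
    (u v : List ℕ) (hu : ∀ x ∈ u, P x) (hv : ∀ x ∈ v, P x) :
    ∀ w ∈ stuffle u v, ∀ x ∈ w, P x := by
  fun_induction stuffle u v with
  | case1 v => simpa using hv
  | case2 a u => simpa using hu
  | case3 a u b v ih₁ ih₂ ih₃ =>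
    simp only [List.forall_mem_cons] at hu hv
    simp only [List.mem_append, List.mem_map]
    rintro w ((⟨t, ht, rfl⟩ | ⟨t, ht, rfl⟩) | ⟨t, ht, rfl⟩) x hx <;>
      simp only [List.mem_cons] at hx <;> rcases hx with rfl | hx
    · exact hu.1
    · exact ih₁ hu.2 (List.forall_mem_cons.2 hv) t ht x hx
    · exact hv.1
    · exact ih₂ (List.forall_mem_cons.2 hu) hv.2 t ht x hx
    · exact hP _ _ hu.1 hv.1
    · exact ih₃ hu.2 hv.2 t ht x hx

theorem exists_eq_cons_of_mem_stuffle {a b : ℕ} {u v w : List ℕ}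
    (hw : w ∈ stuffle (a :: u) (b :: v)) :
    ∃ t, w = a :: t ∨ w = b :: t ∨ w = (a + b) :: t := by
  simp only [stuffle, List.mem_append, List.mem_map] at hw
  rcases hw with (⟨t, -, rfl⟩ | ⟨t, -, rfl⟩) | ⟨t, -, rfl⟩ <;> exact ⟨t, by simp⟩

theorem sum_Ico_mul_sum_Ico {R : Type*} [CommSemiring R] (g h : ℕ → R) (m N : ℕ) :
    (∑ K ∈ Ico m N, g K) * ∑ L ∈ Ico m N, h L =
      ∑ K ∈ Ico m N, g K * ∑ L ∈ Ico m K, h L + ∑ L ∈ Ico m N, (∑ K ∈ Ico m L, g K) * h L +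
        ∑ K ∈ Ico m N, g K * h K := by
  induction N with
  | zero => simp
  | succ N ih =>
    rcases le_or_gt m N with hmN | hNm
    · simp only [sum_Ico_succ_top hmN, add_mul, mul_add, ih]
      ring
    · simp [Ico_eq_empty_of_le (Nat.succ_le_of_lt hNm)]

/-- A word lists the exponents from the largest summation index down:
`mzvTrunc [n_r, …, n_1] N` is the sum over `0 < k_1 < ⋯ < k_r < N`. -/
noncomputable def mzvTrunc : List ℕ → ℕ → ℝ
  | [], _ => 1
  | a :: w, N => ∑ K ∈ Ico 1 N, ((K : ℝ) ^ a)⁻¹ * mzvTrunc w K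

theorem sum_map_mzvTrunc_cons (a : ℕ) (l : List (List ℕ)) (N : ℕ) :
    (l.map fun w => mzvTrunc (a :: w) N).sum =
      ∑ K ∈ Ico 1 N, ((K : ℝ) ^ a)⁻¹ * (l.map fun w => mzvTrunc w K).sum := by
  induction l with
  | nil => simp
  | cons w l ih =>
    rw [List.map_cons, List.sum_cons, ih, mzvTrunc, ← sum_add_distrib]
    simp [mul_add]

theorem mzvTrunc_mul_mzvTrunc (u v : List ℕ) (N : ℕ) :
    mzvTrunc u N * mzvTrunc v N = ((stuffle u v).map fun w => mzvTrunc w N).sum := by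
  induction u, v using stuffle.induct generalizing N with
  | case1 v => simp [stuffle, mzvTrunc]
  | case2 a u => simp [stuffle, mzvTrunc]
  | case3 a u b v ih₁ ih₂ ih₃ =>
    calc mzvTrunc (a :: u) N * mzvTrunc (b :: v) N
        = ∑ K ∈ Ico 1 N, ((K : ℝ) ^ a)⁻¹ * (mzvTrunc u K * mzvTrunc (b :: v) K) +
            ∑ L ∈ Ico 1 N, ((L : ℝ) ^ b)⁻¹ * (mzvTrunc (a :: u) L * mzvTrunc v L) +
            ∑ K ∈ Ico 1 N, ((K : ℝ) ^ (a + b))⁻¹ * (mzvTrunc u K * mzvTrunc v K) := by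
          rw [mzvTrunc, mzvTrunc, sum_Ico_mul_sum_Ico]
          congr 1
          · congr 1 <;> refine sum_congr rfl fun K _ => ?_ <;> simp only [mzvTrunc] <;> ring
          · refine sum_congr rfl fun K _ => ?_
            rw [pow_add, mul_inv]
            ring
      _ = ((stuffle (a :: u) (b :: v)).map fun w => mzvTrunc w N).sum := by
          simp only [ih₁, ih₂, ih₃, ← sum_map_mzvTrunc_cons, stuffle, List.map_append,
            List.map_map, List.sum_append, Function.comp_def]

abbrev IncTuple (r : ℕ) := {k : Fin r → ℕ+ // StrictMono k}

noncomputable def mzvTerm {r : ℕ} (n : Fin r → ℕ) (k : IncTuple r) : ℝ :=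
  ∏ i, 1 / (k.1 i : ℝ) ^ n i

theorem Summable.pi_prod_of_nonneg {ι : Type*} {f : ι → ℝ} (hf : Summable f) (hf0 : 0 ≤ f)
    (r : ℕ) : Summable fun k : Fin r → ι => ∏ i, f (k i) := by
  induction r with
  | zero => exact summable_of_hasFiniteSupport (Set.toFinite _)
  | succ r ih =>
    rw [← (Fin.consEquiv fun _ => ι).summable_iff]
    refine (hf.mul_of_nonneg ih hf0 fun k => prod_nonneg fun i _ => hf0 _).congr fun x => ?_
    simp [Fin.consEquiv, Fin.prod_univ_succ]

theorem prod_rpow_le_prod_pow {r : ℕ} {x : Fin (r + 1) → ℝ} (hx : ∀ i, 1 ≤ x i)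
    (hx_last : ∀ i, x i ≤ x (Fin.last r)) {n : Fin (r + 1) → ℕ} (hn : ∀ i, 1 ≤ n i)
    (hn_last : 2 ≤ n (Fin.last r)) :
    ∏ i, x i ^ (1 + 1 / (r + 1) : ℝ) ≤ ∏ i, x i ^ n i := by
  have hx0 : ∀ i, 0 ≤ x i := fun i => zero_le_one.trans (hx i)
  have hP : 0 < ∏ i, x i := prod_pos fun i _ => zero_lt_one.trans_le (hx i)
  have hroot : (∏ i, x i) ^ (1 / (r + 1) : ℝ) ≤ x (Fin.last r) := by
    calc (∏ i, x i) ^ (1 / (r + 1) : ℝ)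
        ≤ (x (Fin.last r) ^ (r + 1)) ^ (1 / (r + 1) : ℝ) := by
          gcongr
          calc ∏ i, x i ≤ ∏ _i : Fin (r + 1), x (Fin.last r) :=
                prod_le_prod (fun i _ => hx0 i) fun i _ => hx_last i
            _ = x (Fin.last r) ^ (r + 1) := by simp
      _ = x (Fin.last r) := by
          rw [← Real.rpow_natCast, ← Real.rpow_mul (hx0 _), Nat.cast_add_one,
            mul_one_div_cancel (by positivity), Real.rpow_one]
  calc ∏ i, x i ^ (1 + 1 / (r + 1) : ℝ)
      = (∏ i, x i) * (∏ i, x i) ^ (1 / (r + 1) : ℝ) := by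
        rw [Real.finsetProd_rpow _ _ fun i _ => hx0 i, Real.rpow_add hP, Real.rpow_one]
    _ ≤ (∏ i, x i) * x (Fin.last r) := by gcongr
    _ = (∏ i : Fin r, x i.castSucc) * x (Fin.last r) ^ 2 := by
        rw [Fin.prod_univ_castSucc]
        ring
    _ ≤ ∏ i, x i ^ n i := by
        rw [Fin.prod_univ_castSucc]
        refine mul_le_mul (prod_le_prod (fun i _ => hx0 _) fun i _ => ?_)
          (pow_le_pow_right₀ (hx _) hn_last) (by positivity)
          (prod_nonneg fun i _ => pow_nonneg (hx0 _) _)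
        exact le_self_pow₀ (hx _) (Nat.one_le_iff_ne_zero.1 (hn _))

theorem summable_mzvTerm {r : ℕ} {n : Fin (r + 1) → ℕ} (hn : ∀ i, 1 ≤ n i)
    (hn_last : 2 ≤ n (Fin.last r)) : Summable (mzvTerm n) := by
  have hp : (1 : ℝ) < 1 + 1 / (r + 1) := lt_add_of_pos_right _ (by positivity)
  have hdom := ((Real.summable_nat_rpow_inv.2 hp).comp_injective PNat.coe_injective
    |>.pi_prod_of_nonneg (fun _ => inv_nonneg.2 (Real.rpow_nonneg (Nat.cast_nonneg _) _)) (r + 1))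
  refine Summable.of_nonneg_of_le (fun k => prod_nonneg fun i _ => by positivity) (fun k => ?_)
    (hdom.comp_injective Subtype.val_injective)
  have hk : ∀ i, (1 : ℝ) ≤ (k.1 i : ℕ) := fun i => Nat.one_le_cast.2 (k.1 i).pos
  simp only [mzvTerm, Function.comp_apply, prod_div_distrib, prod_const_one, prod_inv_distrib]
  rw [one_div]
  exact inv_anti₀ (prod_pos fun i _ => by positivity) (prod_rpow_le_prod_pow hk
    (fun i => by exact_mod_cast k.2.monotone (Fin.le_last i)) hn hn_last)

theorem Fin.strictMono_snoc {α : Type*} [Preorder α] {m : ℕ} {f : Fin m → α}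
    (hf : StrictMono f) {a : α} (ha : ∀ i, f i < a) :
    StrictMono (Fin.snoc f a : Fin (m + 1) → α) := by
  intro i j hij
  induction j using Fin.lastCases with
  | last =>
    obtain ⟨i, rfl⟩ := Fin.exists_castSucc_eq.2 hij.ne
    simpa using ha i
  | cast j =>
    obtain ⟨i, rfl⟩ := Fin.exists_castSucc_eq.2 (hij.trans (Fin.castSucc_lt_last j)).ne
    simpa using hf (Fin.castSucc_lt_castSucc_iff.1 hij)

namespace IncTuple

variable {m : ℕ}

def init (k : IncTuple (m + 1)) : IncTuple m :=
  ⟨Fin.init k.1, fun _ _ h => k.2 (Fin.castSucc_lt_castSucc_iff.2 h)⟩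

def snoc (k : IncTuple m) (K : ℕ) (hK0 : 0 < K) (hK : ∀ i, (k.1 i : ℕ) < K) :
    IncTuple (m + 1) :=
  ⟨Fin.snoc k.1 ⟨K, hK0⟩, Fin.strictMono_snoc k.2 fun i => (PNat.coe_lt_coe _ _).1 (hK i)⟩

@[simp] theorem coe_snoc_last (k : IncTuple m) (K : ℕ) (hK0 : 0 < K)
    (hK : ∀ i, (k.1 i : ℕ) < K) : ((k.snoc K hK0 hK).1 (Fin.last m) : ℕ) = K :=
  congrArg PNat.val (Fin.snoc_last (α := fun _ => ℕ+) _ _)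

@[simp] theorem snoc_castSucc (k : IncTuple m) (K : ℕ) (hK0 : 0 < K)
    (hK : ∀ i, (k.1 i : ℕ) < K) (i : Fin m) : (k.snoc K hK0 hK).1 i.castSucc = k.1 i :=
  Fin.snoc_castSucc (α := fun _ => ℕ+) _ _ _

@[simp] theorem init_snoc (k : IncTuple m) (K : ℕ) (hK0 : 0 < K)
    (hK : ∀ i, (k.1 i : ℕ) < K) : (k.snoc K hK0 hK).init = k :=
  Subtype.ext (Fin.init_snoc (α := fun _ => ℕ+) _ _)

theorem finite_setOf_lt (r N : ℕ) : {k : IncTuple r | ∀ i, (k.1 i : ℕ) < N}.Finite :=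
  (Set.Finite.preimage (f := fun k : IncTuple r => fun i => (k.1 i : ℕ))
    (fun _ _ _ _ h => Subtype.ext (funext fun i => PNat.coe_injective (congrFun h i)))
    (Set.Finite.pi (t := fun _ => Set.Iio N) fun _ => Set.finite_Iio N)).subset
    fun _ hk i _ => hk i

noncomputable def below (r N : ℕ) : Finset (IncTuple r) := (finite_setOf_lt r N).toFinset

theorem mem_below {r N : ℕ} {k : IncTuple r} : k ∈ below r N ↔ ∀ i, (k.1 i : ℕ) < N :=
  Set.Finite.mem_toFinset _

theorem tendsto_below (r : ℕ) : Tendsto (below r) atTop atTop := by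
  refine tendsto_atTop_finset_of_monotone (fun N M hNM k hk => ?_) fun k => ?_
  · exact mem_below.2 fun i => (mem_below.1 hk i).trans_le hNM
  · exact ⟨univ.sup (fun i => (k.1 i : ℕ)) + 1, mem_below.2 fun i =>
      Nat.lt_succ_of_le (le_sup (f := fun i => (k.1 i : ℕ)) (mem_univ i))⟩

theorem sum_below_succ {M : Type*} [AddCommMonoid M] (N : ℕ) (f : IncTuple (m + 1) → M)
    (g : ℕ → IncTuple m → M) (hfg : ∀ k, f k = g (k.1 (Fin.last m)) k.init) :
    ∑ k ∈ below (m + 1) N, f k = ∑ K ∈ Ico 1 N, ∑ k ∈ below m K, g K k := by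
  rw [sum_sigma']
  refine sum_bij' (fun k _ => ⟨k.1 (Fin.last m), k.init⟩)
    (fun x hx => snoc x.2 x.1 (mem_Ico.1 (mem_sigma.1 hx).1).1 (mem_below.1 (mem_sigma.1 hx).2))
    ?_ ?_ ?_ ?_ ?_
  · intro k hk
    refine mem_sigma.2 ⟨mem_Ico.2 ⟨(k.1 _).pos, mem_below.1 hk _⟩, mem_below.2 fun i => ?_⟩
    exact_mod_cast k.2 (Fin.castSucc_lt_last i)
  · intro x hx
    obtain ⟨hK, hk⟩ := mem_sigma.1 hx
    refine mem_below.2 fun i => ?_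
    induction i using Fin.lastCases with
    | last => simpa using (mem_Ico.1 hK).2
    | cast i => simpa using (mem_below.1 hk i).trans (mem_Ico.1 hK).2
  · intro k _
    exact Subtype.ext (Fin.snoc_init_self k.1)
  · intro x _
    ext <;> simp
  · intro k _
    exact hfg k

end IncTuple

def wordExp (w : List ℕ) (i : Fin w.length) : ℕ := w.reverse[(i : ℕ)]'(by simp)

@[simp] theorem wordExp_cons_last (a : ℕ) (w : List ℕ) :
    wordExp (a :: w) (Fin.last w.length) = a := by
  simp [wordExp]

@[simp] theorem wordExp_cons_castSucc (a : ℕ) (w : List ℕ) (i : Fin w.length) :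
    wordExp (a :: w) i.castSucc = wordExp w i := by
  simp [wordExp, List.getElem_append_left]

theorem wordExp_mem (w : List ℕ) (i : Fin w.length) : wordExp w i ∈ w :=
  List.mem_reverse.1 (List.getElem_mem _)

noncomputable def mzv (w : List ℕ) : ℝ := ∑' k, mzvTerm (wordExp w) k

theorem mzvTerm_cons (a : ℕ) (w : List ℕ) (k : IncTuple (w.length + 1)) :
    mzvTerm (wordExp (a :: w)) k =
      (((k.1 (Fin.last _) : ℕ) : ℝ) ^ a)⁻¹ * mzvTerm (wordExp w) k.init := by
  change ∏ i : Fin (w.length + 1), _ = _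
  rw [Fin.prod_univ_castSucc, mul_comm, one_div]
  simp [mzvTerm, IncTuple.init, Fin.init]

theorem mzvTrunc_eq_sum_below (w : List ℕ) (N : ℕ) :
    mzvTrunc w N = ∑ k ∈ IncTuple.below w.length N, mzvTerm (wordExp w) k := by
  induction w generalizing N with
  | nil =>
    let k₀ : IncTuple 0 := ⟨finZeroElim, fun i => i.elim0⟩
    change _ = ∑ k ∈ IncTuple.below 0 N, _
    rw [sum_eq_single_of_mem k₀ (IncTuple.mem_below.2 finZeroElim)
      fun k _ hk => absurd (Subsingleton.elim k k₀) hk]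
    simp [mzvTrunc, mzvTerm]
  | cons a w ih =>
    simp only [mzvTrunc, ih, mul_sum]
    exact (IncTuple.sum_below_succ N _ _ (mzvTerm_cons a w)).symm

theorem tendsto_mzvTrunc {w : List ℕ} (hw : Summable (mzvTerm (wordExp w))) :
    Tendsto (mzvTrunc w) atTop (𝓝 (mzv w)) :=
  (hw.hasSum.comp (IncTuple.tendsto_below _)).congr fun N => (mzvTrunc_eq_sum_below w N).symm

def Admissible (w : List ℕ) : Prop := (∀ x ∈ w, 1 ≤ x) ∧ 2 ≤ w.headD 0

theorem Admissible.summable {w : List ℕ} (hw : Admissible w) :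
    Summable (mzvTerm (wordExp w)) := by
  obtain ⟨hpos, hhead⟩ := hw
  cases w with
  | nil => simp at hhead
  | cons a w =>
    exact summable_mzvTerm (fun i => hpos _ (wordExp_mem (a :: w) i)) (by simpa using hhead)

theorem Admissible.stuffle {u v : List ℕ} (hu : Admissible u) (hv : Admissible v) :
    ∀ w ∈ stuffle u v, Admissible w := by
  obtain ⟨hu_pos, hu_head⟩ := hu
  obtain ⟨hv_pos, hv_head⟩ := hv
  obtain _ | ⟨a, u⟩ := u
  · simp at hu_head
  obtain _ | ⟨b, v⟩ := v
  · simp at hv_head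
  intro w hw
  refine ⟨forall_mem_stuffle (fun _ _ ha _ => le_add_right ha) _ _ hu_pos hv_pos w hw, ?_⟩
  simp only [List.headD_cons] at hu_head hv_head
  obtain ⟨t, rfl | rfl | rfl⟩ := exists_eq_cons_of_mem_stuffle hw <;>
    simp only [List.headD_cons] <;> omega

theorem mzv_mul_mzv {u v : List ℕ} (hu : Admissible u) (hv : Admissible v) :
    mzv u * mzv v = ((stuffle u v).map mzv).sum := by
  refine tendsto_nhds_unique
    ((tendsto_mzvTrunc hu.summable).mul (tendsto_mzvTrunc hv.summable)) ?_
  simpa only [mzvTrunc_mul_mzvTrunc] using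
    tendsto_list_sum _ fun w hw => tendsto_mzvTrunc (hu.stuffle hv w hw).summable

theorem Admissible.mzv_mem_mzvSet {w : List ℕ} (hw : Admissible w) : mzv w ∈ mzvSet := by
  obtain ⟨hpos, hhead⟩ := hw
  cases w with
  | nil => simp at hhead
  | cons a w =>
    refine ⟨w.length + 1, w.length.succ_pos, wordExp (a :: w),
      fun i => hpos _ (wordExp_mem (a :: w) i), ?_, rfl⟩
    exact (by simpa using hhead : 2 ≤ a).trans_eq (wordExp_cons_last a w).symm

theorem tsum_mzvTerm_comp_cast {r s : ℕ} (h : r = s) (n : Fin s → ℕ) :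
    ∑' k, mzvTerm (n ∘ Fin.cast h) k = ∑' k, mzvTerm n k := by
  subst h
  rfl

theorem exists_admissible_of_mem_mzvSet {x : ℝ} (hx : x ∈ mzvSet) :
    ∃ w, Admissible w ∧ mzv w = x := by
  obtain ⟨r, hr, n, hpos, hlast, rfl⟩ := hx
  obtain ⟨s, rfl⟩ : ∃ s, r = s + 1 := ⟨r - 1, by omega⟩
  refine ⟨(List.ofFn n).reverse, ⟨fun x hx => ?_, ?_⟩, ?_⟩
  · obtain ⟨i, rfl⟩ := List.mem_ofFn.1 (List.mem_reverse.1 hx)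
    exact hpos i
  · rw [List.ofFn_succ', List.concat_eq_append, List.reverse_append]
    exact hlast
  · have hlen : ((List.ofFn n).reverse).length = s + 1 := by simp
    have hexp : wordExp (List.ofFn n).reverse = n ∘ Fin.cast hlen :=
      funext fun i => by simp [wordExp, -List.ofFn_succ]; rfl
    rw [mzv, hexp, tsum_mzvTerm_comp_cast]
    rfl

theorem Submodule.mul_mem_span_insert_one {R A : Type*} [CommSemiring R] [Semiring A]
    [Algebra R A] {S : Set A} (hS : ∀ x ∈ S, ∀ y ∈ S, x * y ∈ span R S) {x y : A}
    (hx : x ∈ span R (insert 1 S)) (hy : y ∈ span R (insert 1 S)) :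
    x * y ∈ span R (insert 1 S) := by
  have hle : span R (insert 1 S) * span R (insert 1 S) ≤ span R (insert (1 : A) S) := by
    rw [span_mul_span, span_le, Set.mul_subset_iff]
    rintro a (rfl | ha) b (rfl | hb)
    · simpa using subset_span (Set.mem_insert _ _)
    · simpa using subset_span (Set.mem_insert_of_mem _ hb)
    · simpa using subset_span (Set.mem_insert_of_mem _ ha)
    · exact span_mono (Set.subset_insert _ _) (hS a ha b hb)
  exact hle (mul_mem_mul hx hy)

/-- The set of all finite `ℚ`-linear combinations of `1` and of multiple zeta values
is a `ℚ`-subalgebra of `ℝ`; in particular, the product of any two multiple zeta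
values is a `ℚ`-linear combination of multiple zeta values. -/
theorem mzv_span_is_subalgebra :
    (∃ A : Subalgebra ℚ ℝ,
      (A : Set ℝ) = (Submodule.span ℚ (insert (1 : ℝ) mzvSet) : Set ℝ)) ∧
    ∀ x ∈ mzvSet, ∀ y ∈ mzvSet, x * y ∈ Submodule.span ℚ mzvSet := by
  have hmul : ∀ x ∈ mzvSet, ∀ y ∈ mzvSet, x * y ∈ Submodule.span ℚ mzvSet := by
    intro x hx y hy
    obtain ⟨u, hu, rfl⟩ := exists_admissible_of_mem_mzvSet hx
    obtain ⟨v, hv, rfl⟩ := exists_admissible_of_mem_mzvSet hy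
    rw [mzv_mul_mzv hu hv]
    refine list_sum_mem fun z hz => ?_
    obtain ⟨w, hw, rfl⟩ := List.mem_map.1 hz
    exact Submodule.subset_span (hu.stuffle hv w hw).mzv_mem_mzvSet
  exact ⟨⟨(Submodule.span ℚ (insert 1 mzvSet)).toSubalgebra
    (Submodule.subset_span (Set.mem_insert _ _))
    fun _ _ => Submodule.mul_mem_span_insert_one hmul, rfl⟩, hmul⟩
end
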